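/- arXiv:quant-ph/0112012 — 7 statements merged into one kernel-verified Lean document; each statement's English description precedes it below -/
import Mathlib

section
/- Let R be a real 3×3 matrix with decreasingly ordered singular values σ₁ ≥ σ₂ ≥ σ₃. Then the maximum of tr(R·X) over all real 3×3 matrices X of rank at most 2 satisfying tr(XᵀX) = 1 equals √(σ₁² + σ₂²). -/
open Matrix Kronecker BigOperators ComplexOrder

noncomputable section

/-- The Pauli matrices σ₁ (x), σ₂ (y), σ₃ (z), indexed by `Fin 3`. -/
def pauli : Fin 3 → Matrix (Fin 2) (Fin 2) ℂ
  | 0 => !![0, 1; 1, 0]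
  | 1 => !![0, -Complex.I; Complex.I, 0]
  | 2 => !![1, 0; 0, -1]

/-- A unit vector in ℝ³. -/
def unitVec (v : Fin 3 → ℝ) : Prop := ∑ i, v i ^ 2 = 1

/-- The CHSH Bell operator associated to measurement directions a, b, c, d. -/
def bellOp (a b c d : Fin 3 → ℝ) : Matrix (Fin 2 × Fin 2) (Fin 2 × Fin 2) ℂ :=
  (1 / 2 : ℂ) • ∑ i, ∑ j,
    ((a i * (c j + d j) + b i * (c j - d j) : ℝ) : ℂ) • (pauli i ⊗ₖ pauli j)

/-- The set of CHSH expectation values of a two-qubit state. -/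
def betaSet (ρ : Matrix (Fin 2 × Fin 2) (Fin 2 × Fin 2) ℂ) : Set ℝ :=
  {t : ℝ | ∃ a b c d : Fin 3 → ℝ, unitVec a ∧ unitVec b ∧ unitVec c ∧ unitVec d ∧
    t = (Matrix.trace (ρ * bellOp a b c d)).re}

/-- The correlation matrix R_{kl} = tr(ρ σ_k ⊗ σ_l). -/
def corr (ρ : Matrix (Fin 2 × Fin 2) (Fin 2 × Fin 2) ℂ) : Matrix (Fin 3) (Fin 3) ℝ :=
  Matrix.of fun k l => (Matrix.trace (ρ * (pauli k ⊗ₖ pauli l))).re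

/-- The four Bell states. -/
def bell : Fin 4 → (Fin 2 × Fin 2) → ℂ
  | 0 => fun p => if p = (0, 0) then (Real.sqrt 2 : ℂ)⁻¹ else if p = (1, 1) then (Real.sqrt 2 : ℂ)⁻¹ else 0
  | 1 => fun p => if p = (0, 0) then (Real.sqrt 2 : ℂ)⁻¹ else if p = (1, 1) then -(Real.sqrt 2 : ℂ)⁻¹ else 0
  | 2 => fun p => if p = (0, 1) then (Real.sqrt 2 : ℂ)⁻¹ else if p = (1, 0) then (Real.sqrt 2 : ℂ)⁻¹ else 0
  | 3 => fun p => if p = (0, 1) then (Real.sqrt 2 : ℂ)⁻¹ else if p = (1, 0) then -(Real.sqrt 2 : ℂ)⁻¹ else 0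

/-- Projector onto the i-th Bell state. -/
def bellProj (i : Fin 4) : Matrix (Fin 2 × Fin 2) (Fin 2 × Fin 2) ℂ :=
  Matrix.vecMulVec (bell i) (star (bell i))


lemma aux_trace_sq (A : Matrix (Fin 3) (Fin 3) ℝ) :
    Matrix.trace (Aᵀ * A) = ∑ j, ∑ i, (A i j)^2 := by
  simp [Matrix.trace, Matrix.mul_apply, Matrix.diag, sq]

lemma aux_eq_zero (A : Matrix (Fin 3) (Fin 3) ℝ) (h : Matrix.trace (Aᵀ * A) = 0) :
    A = 0 := by
  rw [aux_trace_sq] at h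
  have h2 : ∀ j ∈ Finset.univ, ∑ i, (A i j)^2 = 0 := by
    rw [← Finset.sum_eq_zero_iff_of_nonneg]
    · exact h
    · intro j _; positivity
  ext i j
  have := (Finset.sum_eq_zero_iff_of_nonneg (by intro i _; positivity)).mp
    (h2 j (Finset.mem_univ j)) i (Finset.mem_univ i)
  simpa using pow_eq_zero_iff (n := 2) (by norm_num) |>.mp this

-- upper bound core: diagonal case with projection
lemma aux_upper (σ : Fin 3 → ℝ) (hord : Antitone σ) (hpos : ∀ i, 0 ≤ σ i)
    (Y : Matrix (Fin 3) (Fin 3) ℝ) (hrank : Y.rank ≤ 2)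
    (hfro : Matrix.trace (Yᵀ * Y) = 1) :
    Matrix.trace (Matrix.diagonal σ * Y) ≤ Real.sqrt (σ 0 ^ 2 + σ 1 ^ 2) := by
  classical
  set A := Y * Yᵀ with hAdef
  have hA : A.IsHermitian := by
    have := Matrix.isHermitian_mul_conjTranspose_self Y
    simpa [Matrix.conjTranspose_eq_transpose_of_trivial] using this
  set μ := hA.eigenvalues with hμdef
  set Q : Matrix (Fin 3) (Fin 3) ℝ := (hA.eigenvectorUnitary : Matrix (Fin 3) (Fin 3) ℝ) with hQdef
  have hQmem := hA.eigenvectorUnitary.2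
  have hQ1 : Q * Qᵀ = 1 := by
    have := (Matrix.mem_unitaryGroup_iff).mp hQmem
    simpa [Matrix.star_eq_conjTranspose, Matrix.conjTranspose_eq_transpose_of_trivial] using this
  have hQ2 : Qᵀ * Q = 1 := by
    have := (Matrix.mem_unitaryGroup_iff').mp hQmem
    simpa [Matrix.star_eq_conjTranspose, Matrix.conjTranspose_eq_transpose_of_trivial] using this
  have hspec : A = Q * Matrix.diagonal μ * Qᵀ := by
    have := hA.spectral_theorem
    simpa [Matrix.star_eq_conjTranspose, Matrix.conjTranspose_eq_transpose_of_trivial] using this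
  -- indicator of nonzero eigenvalues
  set ind : Fin 3 → ℝ := fun i => if μ i ≠ 0 then 1 else 0 with hinddef
  set P : Matrix (Fin 3) (Fin 3) ℝ := Q * Matrix.diagonal ind * Qᵀ with hPdef
  have hPsymm : Pᵀ = P := by
    rw [hPdef]
    simp [Matrix.transpose_mul, Matrix.diagonal_transpose, Matrix.mul_assoc]
  have hPP : P * P = P := by
    rw [hPdef]
    have : Matrix.diagonal ind * Matrix.diagonal ind = Matrix.diagonal ind := by
      rw [Matrix.diagonal_mul_diagonal]
      have h2 : (fun i => ind i * ind i) = ind := by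
        funext i; by_cases h : μ i = 0 <;> simp [hinddef, h]
      rw [h2]
    calc Q * Matrix.diagonal ind * Qᵀ * (Q * Matrix.diagonal ind * Qᵀ)
        = Q * Matrix.diagonal ind * (Qᵀ * Q) * Matrix.diagonal ind * Qᵀ := by
          simp only [Matrix.mul_assoc]
      _ = Q * Matrix.diagonal ind * Qᵀ := by
          rw [hQ2]; simp only [Matrix.mul_one, Matrix.mul_assoc, this]
  -- eigenvalue/rank bound
  have hcard : Fintype.card {i // μ i ≠ 0} ≤ 2 := by
    calc Fintype.card {i // μ i ≠ 0} = A.rank := hA.rank_eq_card_non_zero_eigs.symm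
      _ = Y.rank := Matrix.rank_self_mul_transpose Y
      _ ≤ 2 := hrank
  -- diagonal entries of P
  have hPjj : ∀ j, P j j = ∑ i, ind i * (Q j i)^2 := by
    intro j
    rw [hPdef]
    simp [Matrix.mul_apply, Matrix.diagonal, Finset.mul_sum, Matrix.transpose_apply, sq]
    congr 1; funext i
    by_cases h : μ i = 0 <;> simp [hinddef, h]
  have hQrow : ∀ j, ∑ i, (Q j i)^2 = 1 := by
    intro j
    have := congrArg (fun M => M j j) hQ1
    simpa [Matrix.mul_apply, Matrix.one_apply, sq] using this
  have hP0 : ∀ j, 0 ≤ P j j := by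
    intro j; rw [hPjj]
    apply Finset.sum_nonneg; intro i _
    have : (0:ℝ) ≤ ind i := by by_cases h : μ i = 0 <;> simp [hinddef, h]
    positivity
  have hP1 : ∀ j, P j j ≤ 1 := by
    intro j; rw [hPjj, ← hQrow j]
    apply Finset.sum_le_sum; intro i _
    have h1 : ind i ≤ 1 := by by_cases h : μ i = 0 <;> simp [hinddef, h]
    have h2 : (0:ℝ) ≤ (Q j i)^2 := by positivity
    nlinarith
  have htrP : P 0 0 + P 1 1 + P 2 2 ≤ 2 := by
    have h1 : Matrix.trace P = ∑ i, ind i := by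
      rw [hPdef]
      rw [Matrix.trace_mul_comm (Q * Matrix.diagonal ind) Qᵀ, ← Matrix.mul_assoc, hQ2,
        Matrix.one_mul, Matrix.trace_diagonal]
    have h2 : ∑ i, ind i = (Fintype.card {i // μ i ≠ 0} : ℝ) := by
      rw [Fintype.card_subtype]
      rw [hinddef]
      rw [← Finset.sum_boole]
    have h3 : Matrix.trace P = P 0 0 + P 1 1 + P 2 2 := by
      simp [Matrix.trace, Matrix.diag, Fin.sum_univ_three]
    have h4 : (Fintype.card {i // μ i ≠ 0} : ℝ) ≤ 2 := by exact_mod_cast hcard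
    linarith [h1, h2, h3]
  -- P * Y = Y
  have hPA : Matrix.trace (P * A) = Matrix.trace A := by
    have e1 : P * A = Q * (Matrix.diagonal ind * Matrix.diagonal μ) * Qᵀ := by
      rw [hPdef, hspec]
      calc Q * Matrix.diagonal ind * Qᵀ * (Q * Matrix.diagonal μ * Qᵀ)
          = Q * Matrix.diagonal ind * (Qᵀ * Q) * Matrix.diagonal μ * Qᵀ := by
            simp only [Matrix.mul_assoc]
        _ = Q * (Matrix.diagonal ind * Matrix.diagonal μ) * Qᵀ := by
            rw [hQ2]; simp only [Matrix.mul_one, Matrix.mul_assoc]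
    have e2 : Matrix.trace (Q * (Matrix.diagonal ind * Matrix.diagonal μ) * Qᵀ)
        = Matrix.trace (Matrix.diagonal ind * Matrix.diagonal μ) := by
      rw [Matrix.trace_mul_comm, ← Matrix.mul_assoc, hQ2, Matrix.one_mul]
    have e3 : Matrix.trace A = Matrix.trace (Matrix.diagonal μ) := by
      conv_lhs => rw [hspec]
      rw [Matrix.trace_mul_comm, ← Matrix.mul_assoc, hQ2, Matrix.one_mul]
    rw [e1, e2, e3, Matrix.diagonal_mul_diagonal, Matrix.trace_diagonal, Matrix.trace_diagonal]
    apply Finset.sum_congr rfl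
    intro i _
    by_cases h : μ i = 0 <;> simp [hinddef, h]
  have hPY : P * Y = Y := by
    have key : Matrix.trace ((Y - P * Y)ᵀ * (Y - P * Y)) = 0 := by
      have expand : (Y - P * Y)ᵀ * (Y - P * Y) = Yᵀ * Y - Yᵀ * (P * Y) := by
        rw [Matrix.transpose_sub, Matrix.transpose_mul, hPsymm]
        rw [Matrix.sub_mul, Matrix.mul_sub, Matrix.mul_sub]
        have : Yᵀ * P * (P * Y) = Yᵀ * (P * Y) := by
          rw [Matrix.mul_assoc, ← Matrix.mul_assoc P P Y, hPP]
        rw [Matrix.mul_assoc Yᵀ P Y, this]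
        abel
      have t1 : Matrix.trace (Yᵀ * (P * Y)) = Matrix.trace (P * A) := by
        rw [Matrix.trace_mul_comm, Matrix.mul_assoc, hAdef]
      have t2 : Matrix.trace (Yᵀ * Y) = Matrix.trace A := by
        rw [hAdef, Matrix.trace_mul_comm]
      rw [expand, Matrix.trace_sub, t1, t2, hPA, sub_self]
    have := aux_eq_zero _ key
    have h0 : Y - P * Y = 0 := this
    linear_combination (norm := module) -h0
  -- now the Cauchy-Schwarz step
  set D := Matrix.diagonal σ with hDdef
  set B : Matrix (Fin 3) (Fin 3) ℝ := P * D with hBdef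
  have hfrob : ∀ M N : Matrix (Fin 3) (Fin 3) ℝ,
      Matrix.trace (Mᵀ * N) = ∑ p : Fin 3 × Fin 3, M p.1 p.2 * N p.1 p.2 := by
    intro M N
    rw [Fintype.sum_prod_type]
    simp only [Matrix.trace, Matrix.diag, Matrix.mul_apply, Matrix.transpose_apply]
    rw [Finset.sum_comm]
  have htr : Matrix.trace (D * Y) = ∑ p : Fin 3 × Fin 3, B p.1 p.2 * Y p.1 p.2 := by
    rw [← hfrob]
    congr 1
    rw [hBdef, Matrix.transpose_mul, Matrix.diagonal_transpose, hPsymm, Matrix.mul_assoc, hPY]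
  have hYsum : ∑ p : Fin 3 × Fin 3, (Y p.1 p.2)^2 = 1 := by
    have h := hfrob Y Y
    rw [hfro] at h
    calc ∑ p : Fin 3 × Fin 3, (Y p.1 p.2)^2
        = ∑ p : Fin 3 × Fin 3, Y p.1 p.2 * Y p.1 p.2 := by
          apply Finset.sum_congr rfl; intro p _; ring
      _ = 1 := h.symm
  have hBsum : ∑ p : Fin 3 × Fin 3, (B p.1 p.2)^2 = ∑ i, σ i ^ 2 * P i i := by
    have e1 : ∑ p : Fin 3 × Fin 3, (B p.1 p.2)^2 = Matrix.trace (Bᵀ * B) := by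
      rw [hfrob]; apply Finset.sum_congr rfl; intro p _; ring
    have e2 : Bᵀ * B = D * P * D := by
      rw [hBdef, Matrix.transpose_mul, Matrix.diagonal_transpose, hPsymm]
      calc D * P * (P * D) = D * (P * P) * D := by simp only [Matrix.mul_assoc]
        _ = D * P * D := by rw [hPP]
    have e3 : Matrix.trace (D * P * D) = Matrix.trace (Matrix.diagonal (fun i => σ i * σ i) * P) := by
      rw [Matrix.trace_mul_comm, ← Matrix.mul_assoc, hDdef, Matrix.diagonal_mul_diagonal]
    rw [e1, e2, e3]
    simp only [Matrix.trace, Matrix.diag, Matrix.diagonal_mul]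
    apply Finset.sum_congr rfl; intro i _; ring
  have hkey : ∑ i, σ i ^ 2 * P i i ≤ σ 0 ^ 2 + σ 1 ^ 2 := by
    have h01 : σ 1 ≤ σ 0 := hord (by decide)
    have h12 : σ 2 ≤ σ 1 := hord (by decide)
    have hsq01 : σ 1 ^ 2 ≤ σ 0 ^ 2 := pow_le_pow_left₀ (hpos 1) h01 2
    have hsq12 : σ 2 ^ 2 ≤ σ 1 ^ 2 := pow_le_pow_left₀ (hpos 2) h12 2
    have f1 : (0:ℝ) ≤ (σ 0 ^ 2 - σ 1 ^ 2) * (1 - P 0 0) :=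
      mul_nonneg (by linarith) (by linarith [hP1 0])
    have f2 : (0:ℝ) ≤ (σ 1 ^ 2 - σ 2 ^ 2) * (2 - P 0 0 - P 1 1) :=
      mul_nonneg (by linarith) (by linarith [hP1 0, hP1 1])
    have f3 : (0:ℝ) ≤ σ 2 ^ 2 * (2 - P 0 0 - P 1 1 - P 2 2) :=
      mul_nonneg (sq_nonneg _) (by linarith [htrP])
    rw [Fin.sum_univ_three]
    nlinarith [f1, f2, f3]
  have hsq : (Matrix.trace (D * Y))^2 ≤ σ 0 ^ 2 + σ 1 ^ 2 := by
    rw [htr]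
    calc (∑ p : Fin 3 × Fin 3, B p.1 p.2 * Y p.1 p.2)^2
        ≤ (∑ p : Fin 3 × Fin 3, (B p.1 p.2)^2) * (∑ p : Fin 3 × Fin 3, (Y p.1 p.2)^2) :=
          Finset.sum_mul_sq_le_sq_mul_sq _ _ _
      _ = ∑ i, σ i ^ 2 * P i i := by rw [hYsum, hBsum, mul_one]
      _ ≤ σ 0 ^ 2 + σ 1 ^ 2 := hkey
  calc Matrix.trace (D * Y) ≤ |Matrix.trace (D * Y)| := le_abs_self _
    _ = Real.sqrt ((Matrix.trace (D * Y))^2) := (Real.sqrt_sq_eq_abs _).symm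
    _ ≤ Real.sqrt (σ 0 ^ 2 + σ 1 ^ 2) := Real.sqrt_le_sqrt hsq
lemma aux_cancel (A M W W' N B : Matrix (Fin 3) (Fin 3) ℝ) (h : W * W' = 1) :
    (A * M * W) * (W' * N * B) = A * (M * N) * B := by
  have h2 : W * (W' * (N * B)) = N * B := by rw [← Matrix.mul_assoc, h, Matrix.one_mul]
  simp only [Matrix.mul_assoc, h2]

lemma aux_conj_trace (W M : Matrix (Fin 3) (Fin 3) ℝ) (h : Wᵀ * W = 1) :
    Matrix.trace (W * M * Wᵀ) = Matrix.trace M := by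
  rw [Matrix.trace_mul_comm, ← Matrix.mul_assoc, h, Matrix.one_mul]

lemma aux_rank_diag_le (d : Fin 3 → ℝ) (hd : d 2 = 0) : (Matrix.diagonal d).rank ≤ 2 := by
  classical
  rw [Matrix.rank_diagonal, Fintype.card_subtype]
  have hsub : Finset.univ.filter (fun i => d i ≠ 0) ⊆ ({0, 1} : Finset (Fin 3)) := by
    intro i hi
    simp only [Finset.mem_filter] at hi
    fin_cases i
    · simp
    · simp
    · exact absurd hd hi.2
  calc (Finset.univ.filter (fun i => d i ≠ 0)).card ≤ ({0,1} : Finset (Fin 3)).card :=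
        Finset.card_le_card hsub
    _ ≤ 2 := by decide

/-- the maximum of tr(R·X) over rank ≤ 2 matrices X with tr(XᵀX) = 1
equals √(σ₁² + σ₂²), where σ₁ ≥ σ₂ ≥ σ₃ are the singular values of R. -/
theorem max_trace_rank_two (R : Matrix (Fin 3) (Fin 3) ℝ) (σ : Fin 3 → ℝ)
    (hord : Antitone σ) (hpos : ∀ i, 0 ≤ σ i)
    (hsvd : ∃ U ∈ Matrix.orthogonalGroup (Fin 3) ℝ, ∃ V ∈ Matrix.orthogonalGroup (Fin 3) ℝ,
      R = U * Matrix.diagonal σ * Vᵀ) :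
    IsGreatest
      {t : ℝ | ∃ X : Matrix (Fin 3) (Fin 3) ℝ,
        X.rank ≤ 2 ∧ Matrix.trace (Xᵀ * X) = 1 ∧ t = Matrix.trace (R * X)}
      (Real.sqrt (σ 0 ^ 2 + σ 1 ^ 2)) := by
  obtain ⟨U, hU, V, hV, hR⟩ := hsvd
  have hU1 : U * Uᵀ = 1 := by
    simpa using (Matrix.mem_orthogonalGroup_iff (Fin 3) ℝ).mp hU
  have hU2 : Uᵀ * U = 1 := by
    simpa using (Matrix.mem_orthogonalGroup_iff' (Fin 3) ℝ).mp hU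
  have hV1 : V * Vᵀ = 1 := by
    simpa using (Matrix.mem_orthogonalGroup_iff (Fin 3) ℝ).mp hV
  have hV2 : Vᵀ * V = 1 := by
    simpa using (Matrix.mem_orthogonalGroup_iff' (Fin 3) ℝ).mp hV
  constructor
  · -- membership
    by_cases hz : σ 0 ^ 2 + σ 1 ^ 2 = 0
    · have h0 : σ 0 = 0 := by nlinarith [sq_nonneg (σ 0), sq_nonneg (σ 1)]
      have h1 : σ 1 = 0 := by nlinarith [sq_nonneg (σ 0), sq_nonneg (σ 1)]
      have h2 : σ 2 = 0 := le_antisymm (h1 ▸ hord (show (1:Fin 3) ≤ 2 by decide)) (hpos 2)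
      have hσ : σ = fun _ => 0 := by funext i; fin_cases i <;> assumption
      refine ⟨Matrix.diagonal ![1, 0, 0], aux_rank_diag_le _ (by simp), ?_, ?_⟩
      · rw [Matrix.diagonal_transpose, Matrix.diagonal_mul_diagonal, Matrix.trace_diagonal]
        norm_num [Fin.sum_univ_three]
        rfl
      · rw [hR, hσ]
        simp
    · set s := Real.sqrt (σ 0 ^ 2 + σ 1 ^ 2) with hsdef
      have hznn : 0 ≤ σ 0 ^ 2 + σ 1 ^ 2 := by positivity
      have hs2 : s ^ 2 = σ 0 ^ 2 + σ 1 ^ 2 := Real.sq_sqrt hznn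
      have hs : s ≠ 0 := by
        intro h; rw [h] at hs2; exact hz (by linarith [hs2])
      set d : Fin 3 → ℝ := ![σ 0 / s, σ 1 / s, 0] with hddef
      refine ⟨V * Matrix.diagonal d * Uᵀ, ?_, ?_, ?_⟩
      · calc (V * Matrix.diagonal d * Uᵀ).rank
            ≤ (V * Matrix.diagonal d).rank := Matrix.rank_mul_le_left _ _
          _ ≤ (Matrix.diagonal d).rank := Matrix.rank_mul_le_right _ _
          _ ≤ 2 := aux_rank_diag_le d (by simp [hddef])
      · have ht : (V * Matrix.diagonal d * Uᵀ)ᵀ = U * Matrix.diagonal d * Vᵀ := by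
          simp [Matrix.transpose_mul, Matrix.diagonal_transpose, Matrix.mul_assoc]
        rw [ht, aux_cancel U (Matrix.diagonal d) Vᵀ V (Matrix.diagonal d) Uᵀ hV2,
          aux_conj_trace U _ hU2, Matrix.diagonal_mul_diagonal, Matrix.trace_diagonal]
        rw [Fin.sum_univ_three]
        simp only [hddef]
        simp only [Matrix.cons_val_zero, Matrix.cons_val_one, Matrix.head_cons,
          Matrix.cons_val_two, Matrix.tail_cons]
        field_simp
        linarith [hs2]
      · rw [hR, aux_cancel U (Matrix.diagonal σ) Vᵀ V (Matrix.diagonal d) Uᵀ hV2,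
          aux_conj_trace U _ hU2, Matrix.diagonal_mul_diagonal, Matrix.trace_diagonal]
        rw [Fin.sum_univ_three]
        simp only [hddef]
        simp only [Matrix.cons_val_zero, Matrix.cons_val_one, Matrix.head_cons,
          Matrix.cons_val_two, Matrix.tail_cons]
        have : s * s = σ 0 ^ 2 + σ 1 ^ 2 := by nlinarith [hs2]
        field_simp
        nlinarith [this]
  · rintro t ⟨X, hrank, hfro, rfl⟩
    set Y := Vᵀ * X * U with hYdef
    have hYrank : Y.rank ≤ 2 :=
      le_trans (le_trans (Matrix.rank_mul_le_left _ _) (Matrix.rank_mul_le_right _ _)) hrank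
    have hYfro : Matrix.trace (Yᵀ * Y) = 1 := by
      have ht : Yᵀ = Uᵀ * Xᵀ * V := by
        simp [hYdef, Matrix.transpose_mul, Matrix.mul_assoc]
      rw [ht, hYdef, aux_cancel Uᵀ Xᵀ V Vᵀ X U hV1]
      have : Matrix.trace (Uᵀ * (Xᵀ * X) * U) = Matrix.trace (Xᵀ * X) := by
        have := aux_conj_trace Uᵀ (Xᵀ * X) (by simpa using hU1)
        simpa using this
      rw [this, hfro]
    have htr : Matrix.trace (R * X) = Matrix.trace (Matrix.diagonal σ * Y) := by
      have e : R * X = U * (Matrix.diagonal σ * (Vᵀ * X)) := by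
        rw [hR]; simp only [Matrix.mul_assoc]
      rw [e, Matrix.trace_mul_comm, hYdef]
      congr 1
      simp only [Matrix.mul_assoc]
    rw [htr]
    exact aux_upper σ hord hpos Y hYrank hYfro
end
end

section
/- For every real 3×3 matrix X with rank X ≤ 2 and tr(XᵀX) = 1, there exist unit vectors a, b, c, d ∈ ℝ³ such that X = (1/2)((c+d)·aᵀ + (c−d)·bᵀ). -/
open Matrix Kronecker BigOperators ComplexOrder

noncomputable section

/-- every real 3×3 matrix X of rank ≤ 2 with tr(XᵀX) = 1 arises as
X = (1/2)((c+d)·aᵀ + (c−d)·bᵀ) for some unit vectors a, b, c, d ∈ ℝ³. -/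
theorem exists_bell_vectors_of_rank_two (X : Matrix (Fin 3) (Fin 3) ℝ)
    (hrank : X.rank ≤ 2) (hnorm : Matrix.trace (Xᵀ * X) = 1) :
    ∃ a b c d : Fin 3 → ℝ, unitVec a ∧ unitVec b ∧ unitVec c ∧ unitVec d ∧
      X = (1 / 2 : ℝ) • (Matrix.vecMulVec (c + d) a + Matrix.vecMulVec (c - d) b) := by
  classical
  have hM : (Xᵀ * X).IsHermitian := Matrix.isHermitian_conjTranspose_mul_self X
  -- det X = 0 from rank ≤ 2
  have hdet : X.det = 0 := by
    by_contra h
    have h3 : X.rank = 3 := by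
      simpa using Matrix.rank_of_isUnit X
        ((Matrix.isUnit_iff_isUnit_det X).mpr (isUnit_iff_ne_zero.mpr h))
    omega
  have hdetM : (Xᵀ * X).det = 0 := by
    rw [Matrix.det_mul, hdet, mul_zero]
  have hprod : ∏ r, hM.eigenvalues r = 0 := by
    have h := hM.det_eq_prod_eigenvalues
    rw [hdetM] at h
    exact_mod_cast h.symm
  obtain ⟨k, -, hk⟩ := Finset.prod_eq_zero_iff.mp hprod
  set e := hM.eigenvectorBasis with he
  -- orthonormality as dot products
  have horth : ∀ r r' : Fin 3, (⇑(e r)) ⬝ᵥ (⇑(e r')) = if r = r' then 1 else 0 := by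
    intro r r'
    have := (orthonormal_iff_ite.mp e.orthonormal) r r'
    simpa [PiLp.inner_apply, RCLike.inner_apply, dotProduct, conj_trivial, mul_comm] using this
  -- completeness : EᵀE = 1 implies EEᵀ = 1
  have hcomp : ∀ x y : Fin 3, ∑ r, e r x * e r y = if x = y then 1 else 0 := by
    intro x y
    set E : Matrix (Fin 3) (Fin 3) ℝ := Matrix.of (fun r x => e r x) with hE
    have hEEt : E * Eᵀ = 1 := by
      ext r r'
      simpa [Matrix.mul_apply, hE, Matrix.one_apply, dotProduct] using horth r r'
    have hEtE : Eᵀ * E = 1 := mul_eq_one_comm.mp hEEt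
    have := congrFun (congrFun hEtE x) y
    simpa [Matrix.mul_apply, hE, Matrix.one_apply] using this
  -- dot products of images
  have hdot : ∀ r r' : Fin 3,
      (X *ᵥ ⇑(e r)) ⬝ᵥ (X *ᵥ ⇑(e r')) = hM.eigenvalues r' * (if r = r' then 1 else 0) := by
    intro r r'
    have h1 : (X *ᵥ ⇑(e r)) ⬝ᵥ (X *ᵥ ⇑(e r')) = (⇑(e r)) ⬝ᵥ ((Xᵀ * X) *ᵥ ⇑(e r')) := by
      rw [Matrix.dotProduct_mulVec, Matrix.dotProduct_mulVec, ← Matrix.vecMul_vecMul,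
        Matrix.vecMul_transpose]
    rw [h1, hM.mulVec_eigenvectorBasis, dotProduct_smul, smul_eq_mul, horth]
  -- expansion of X entries
  have hXexp : ∀ s t, X s t = ∑ r, (X *ᵥ ⇑(e r)) s * e r t := by
    intro s t
    calc X s t = ∑ x, X s x * (if x = t then 1 else 0) := by simp
    _ = ∑ x, ∑ r, X s x * e r x * e r t := by
        refine Finset.sum_congr rfl fun x _ => ?_
        rw [← hcomp x t, Finset.mul_sum]
        simp [mul_assoc]
    _ = ∑ r, (X *ᵥ ⇑(e r)) s * e r t := by
        rw [Finset.sum_comm]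
        simp [Matrix.mulVec, dotProduct, Finset.sum_mul]
  -- the zero-eigenvalue direction is killed
  have hXek : X *ᵥ ⇑(e k) = 0 := by
    have h0 : (X *ᵥ ⇑(e k)) ⬝ᵥ (X *ᵥ ⇑(e k)) = 0 := by rw [hdot, hk, zero_mul]
    funext s
    have := (Finset.sum_eq_zero_iff_of_nonneg
      (fun s _ => mul_self_nonneg ((X *ᵥ ⇑(e k)) s))).mp h0 s (Finset.mem_univ s)
    exact mul_self_eq_zero.mp this
  -- pick the other two indices
  have hsum3 : ∀ (k : Fin 3) (f : Fin 3 → ℝ), ∑ r, f r = f (k + 1) + f (k + 2) + f k := by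
    intro k f
    fin_cases k <;> (simp [Fin.sum_univ_three]; try ring)
  set i := k + 1 with hi
  set j := k + 2 with hj
  have hij : i ≠ j := by fin_cases k <;> decide
  set a : Fin 3 → ℝ := ⇑(e i) with ha
  set b : Fin 3 → ℝ := ⇑(e j) with hb
  set p : Fin 3 → ℝ := X *ᵥ a with hp
  set q : Fin 3 → ℝ := X *ᵥ b with hq
  have hX' : ∀ s t, X s t = p s * a t + q s * b t := by
    intro s t
    rw [hXexp s t, hsum3 k (fun r => (X *ᵥ ⇑(e r)) s * e r t), hXek]
    simp [hp, hq, ha, hb, hi, hj]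
  have hpq : p ⬝ᵥ q = 0 := by
    rw [hp, hq, ha, hb, hdot i j, if_neg hij, mul_zero]
  have hab : a ⬝ᵥ b = 0 := by
    rw [ha, hb, horth i j, if_neg hij]
  have haa : ∑ t, a t ^ 2 = 1 := by
    have := horth i i
    simpa [dotProduct, pow_two, ha] using this
  have hbb : ∑ t, b t ^ 2 = 1 := by
    have := horth j j
    simpa [dotProduct, pow_two, hb] using this
  -- Frobenius norm gives |p|² + |q|² = 1
  have hfrob : ∑ s, p s ^ 2 + ∑ s, q s ^ 2 = 1 := by
    have h1 : ∑ t, ∑ s, X s t * X s t = 1 := by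
      have := hnorm
      simpa [Matrix.trace, Matrix.diag, Matrix.mul_apply, Matrix.transpose_apply] using this
    have h2 : ∑ t, ∑ s, X s t * X s t
        = (∑ s, p s ^ 2) * (∑ t, a t ^ 2) + (∑ s, q s ^ 2) * (∑ t, b t ^ 2)
          + 2 * (∑ s, p s * q s) * (∑ t, a t * b t) := by
      have : ∀ t s, X s t * X s t = p s ^ 2 * a t ^ 2 + q s ^ 2 * b t ^ 2
          + 2 * (p s * q s) * (a t * b t) := by
        intro t s; rw [hX' s t]; ring
      simp only [this, Finset.sum_add_distrib]
      rw [Finset.sum_comm (f := fun t s => p s ^ 2 * a t ^ 2),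
        Finset.sum_comm (f := fun t s => q s ^ 2 * b t ^ 2),
        Finset.sum_comm (f := fun t s => 2 * (p s * q s) * (a t * b t))]
      simp only [← Finset.sum_mul, ← Finset.mul_sum]
      try ring
    have hab' : ∑ t, a t * b t = 0 := hab
    have hpq' : ∑ s, p s * q s = 0 := hpq
    rw [h2, haa, hbb, hab', hpq'] at h1
    linarith
  refine ⟨a, b, p + q, p - q, haa, hbb, ?_, ?_, ?_⟩
  · show ∑ s, (p s + q s) ^ 2 = 1
    have : ∑ s, (p s + q s) ^ 2 = ∑ s, p s ^ 2 + ∑ s, q s ^ 2 + 2 * ∑ s, p s * q s := by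
      rw [← Finset.sum_add_distrib, Finset.mul_sum, ← Finset.sum_add_distrib]
      congr 1; funext s; ring
    rw [this, hfrob]
    have hpq' : ∑ s, p s * q s = 0 := hpq
    rw [hpq']; ring
  · show ∑ s, (p s - q s) ^ 2 = 1
    have : ∑ s, (p s - q s) ^ 2 = ∑ s, p s ^ 2 + ∑ s, q s ^ 2 - 2 * ∑ s, p s * q s := by
      rw [Finset.mul_sum, ← Finset.sum_add_distrib, ← Finset.sum_sub_distrib]
      congr 1; funext s; ring
    rw [this, hfrob]
    have hpq' : ∑ s, p s * q s = 0 := hpq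
    rw [hpq']; ring
  · ext s t
    simp only [Matrix.smul_apply, Matrix.add_apply, Matrix.vecMulVec_apply,
      Pi.add_apply, Pi.sub_apply, smul_eq_mul]
    rw [hX' s t]; ring
end
end

section
/- Let ρ be a density matrix on ℂ²⊗ℂ² and let R be the 3×3 real matrix with entries R_{kl} = tr(ρ·(σ_k⊗σ_l)) for k,l ∈ {1,2,3}, where σ_k are the Pauli matrices. Then the maximal CHSH expectation β(ρ) = max over unit vectors a,b,c,d ∈ ℝ³ of tr(ρ·B), where B = (1/2)∑_{ij} [a_i(c_j+d_j) + b_i(c_j−d_j)] σ_i⊗σ_j, equals √(σ₁² + σ₂²), with σ₁ ≥ σ₂ the two largest singular values of R. -/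
open Matrix Kronecker BigOperators ComplexOrder

noncomputable section

set_option maxHeartbeats 1000000

lemma trace_bell (ρ : Matrix (Fin 2 × Fin 2) (Fin 2 × Fin 2) ℂ) (a b c d : Fin 3 → ℝ) :
    (Matrix.trace (ρ * bellOp a b c d)).re
      = (1/2) * ∑ i, ∑ j, (a i * (c j + d j) + b i * (c j - d j)) * corr ρ i j := by
  unfold bellOp
  simp only [Matrix.mul_smul, Matrix.mul_sum, Matrix.trace_smul, Matrix.trace_sum,
    smul_eq_mul, Complex.re_sum, Complex.mul_re, Complex.ofReal_re, Complex.ofReal_im]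
  simp [Complex.re_sum, Complex.div_re, corr]

lemma orth_tt {V : Matrix (Fin 3) (Fin 3) ℝ} (h : V ∈ Matrix.orthogonalGroup (Fin 3) ℝ) :
    Vᵀ * V = 1 := by
  rw [Matrix.mem_orthogonalGroup_iff'] at h
  simpa [Matrix.star_eq_conjTranspose, Matrix.conjTranspose] using h

lemma orth_tt' {V : Matrix (Fin 3) (Fin 3) ℝ} (h : V ∈ Matrix.orthogonalGroup (Fin 3) ℝ) :
    V * Vᵀ = 1 := by
  rw [Matrix.mem_orthogonalGroup_iff] at h
  simpa [Matrix.star_eq_conjTranspose, Matrix.conjTranspose] using h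

lemma dsum (R : Matrix (Fin 3) (Fin 3) ℝ) (a x : Fin 3 → ℝ) :
    ∑ i, ∑ j, a i * x j * R i j = a ⬝ᵥ R.mulVec x := by
  simp only [Matrix.mulVec, dotProduct, Finset.mul_sum]
  exact Finset.sum_congr rfl fun i _ => Finset.sum_congr rfl fun j _ => by ring

lemma quad (R U V : Matrix (Fin 3) (Fin 3) ℝ) (σ : Fin 3 → ℝ)
    (hU : Uᵀ * U = 1) (hR : R = U * Matrix.diagonal σ * Vᵀ) (x : Fin 3 → ℝ) :
    ∑ i, (R.mulVec x i)^2 = ∑ i, σ i ^2 * (Vᵀ.mulVec x i)^2 := by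
  have h1 : ∑ i, (R.mulVec x i)^2 = R.mulVec x ⬝ᵥ R.mulVec x := by
    simp [dotProduct, sq]
  rw [h1, Matrix.dotProduct_mulVec, ← Matrix.mulVec_transpose, Matrix.mulVec_mulVec]
  have h2 : Rᵀ * R = V * (Matrix.diagonal fun i => σ i ^ 2) * Vᵀ := by
    rw [hR]
    simp only [Matrix.transpose_mul, Matrix.transpose_transpose, Matrix.diagonal_transpose]
    calc Vᵀᵀ * ((Matrix.diagonal σ) * Uᵀ) * (U * Matrix.diagonal σ * Vᵀ)
        = V * (Matrix.diagonal σ * (Uᵀ * U) * Matrix.diagonal σ) * Vᵀ := by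
          simp [Matrix.mul_assoc]
      _ = V * (Matrix.diagonal fun i => σ i ^ 2) * Vᵀ := by
          rw [hU]; simp [Matrix.diagonal_mul_diagonal, sq]
  rw [h2]
  rw [← Matrix.mulVec_mulVec, ← Matrix.mulVec_mulVec, dotProduct_comm,
    Matrix.dotProduct_mulVec, ← Matrix.mulVec_transpose]
  simp [Matrix.mulVec_diagonal, dotProduct]
  exact Finset.sum_congr rfl fun i _ => by ring

lemma orthdot (V : Matrix (Fin 3) (Fin 3) ℝ) (h : Vᵀ * V = 1) (x y : Fin 3 → ℝ) :
    V.mulVec x ⬝ᵥ V.mulVec y = x ⬝ᵥ y := by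
  rw [Matrix.dotProduct_mulVec, ← Matrix.mulVec_transpose, Matrix.mulVec_mulVec, h,
    Matrix.one_mulVec]

lemma le_sqrt_of_sq_le' (x T : ℝ) (h : x^2 ≤ T) : x ≤ Real.sqrt T := by
  have hT : 0 ≤ T := le_trans (sq_nonneg x) h
  nlinarith [Real.sq_sqrt hT, Real.sqrt_nonneg T]

lemma sq_le_imp (x y : ℝ) (hy : 0 ≤ y) (h : x^2 ≤ y^2) : x ≤ y := by nlinarith

lemma key_ineq (σ0 σ1 σ2 p0 p1 p2 q0 q1 q2 : ℝ)
    (h01 : σ1 ≤ σ0) (h12 : σ2 ≤ σ1) (h2 : 0 ≤ σ2)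
    (hdot : p0*q0 + p1*q1 + p2*q2 = 0)
    (hsum : (p0^2+p1^2+p2^2) + (q0^2+q1^2+q2^2) = 4) :
    Real.sqrt (σ0^2*p0^2 + σ1^2*p1^2 + σ2^2*p2^2)
      + Real.sqrt (σ0^2*q0^2 + σ1^2*q1^2 + σ2^2*q2^2)
      ≤ 2 * Real.sqrt (σ0^2 + σ1^2) := by
  set α := p0^2+p1^2+p2^2 with hα
  set β := q0^2+q1^2+q2^2 with hβ
  set X := σ0^2*p0^2 + σ1^2*p1^2 + σ2^2*p2^2 with hX
  set Y := σ0^2*q0^2 + σ1^2*q1^2 + σ2^2*q2^2 with hY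
  have hαn : 0 ≤ α := by positivity
  have hβn : 0 ≤ β := by positivity
  have hXn : 0 ≤ X := by positivity
  have hYn : 0 ≤ Y := by positivity
  set A := Real.sqrt X with hA
  set B := Real.sqrt Y with hB
  have hA2 : A^2 = X := Real.sq_sqrt hXn
  have hB2 : B^2 = Y := Real.sq_sqrt hYn
  have hAn : 0 ≤ A := Real.sqrt_nonneg X
  have hBn : 0 ≤ B := Real.sqrt_nonneg Y
  have hs01 : σ1^2 ≤ σ0^2 := by nlinarith [h01, h12, h2]
  have hs02 : σ2^2 ≤ σ0^2 := by nlinarith [h01, h12, h2]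
  have hs12 : σ2^2 ≤ σ1^2 := by nlinarith [h01, h12, h2]
  have hsn : 0 ≤ 2 * Real.sqrt (σ0^2+σ1^2) := by positivity
  have hs2 : (Real.sqrt (σ0^2+σ1^2))^2 = σ0^2+σ1^2 := Real.sq_sqrt (by positivity)
  apply sq_le_imp _ _ hsn
  have goalsq : (A+B)^2 ≤ 4*(σ0^2+σ1^2) := by
    rcases eq_or_lt_of_le hαn with hα0 | hαp
    · -- α = 0
      have hp0 : p0^2 = 0 := by linarith [sq_nonneg p0, sq_nonneg p1, sq_nonneg p2]
      have hp1 : p1^2 = 0 := by linarith [sq_nonneg p0, sq_nonneg p1, sq_nonneg p2]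
      have hp2 : p2^2 = 0 := by linarith [sq_nonneg p0, sq_nonneg p1, sq_nonneg p2]
      have hX0 : X = 0 := by rw [hX, hp0, hp1, hp2]; ring
      have hA0 : A = 0 := by rw [hA, hX0, Real.sqrt_zero]
      have hq : q0^2+q1^2+q2^2 = 4 := by
        have := hsum; rw [hα, hβ] at this; linarith [hp0, hp1, hp2]
      have hq4 : σ0^2*(q0^2+q1^2+q2^2) = σ0^2*4 := by rw [hq]
      have m1 : 0 ≤ (σ0^2-σ1^2)*q1^2 := mul_nonneg (by linarith) (sq_nonneg q1)
      have m2 : 0 ≤ (σ0^2-σ2^2)*q2^2 := mul_nonneg (by linarith) (sq_nonneg q2)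
      have hY4 : Y ≤ 4*σ0^2 := by rw [hY]; linarith [m1, m2, hq4]
      rw [hA0, zero_add]
      linarith [hB2, hY4, sq_nonneg σ1]
    rcases eq_or_lt_of_le hβn with hβ0 | hβp
    · have hq0 : q0^2 = 0 := by linarith [sq_nonneg q0, sq_nonneg q1, sq_nonneg q2]
      have hq1 : q1^2 = 0 := by linarith [sq_nonneg q0, sq_nonneg q1, sq_nonneg q2]
      have hq2 : q2^2 = 0 := by linarith [sq_nonneg q0, sq_nonneg q1, sq_nonneg q2]
      have hY0 : Y = 0 := by rw [hY, hq0, hq1, hq2]; ring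
      have hB0 : B = 0 := by rw [hB, hY0, Real.sqrt_zero]
      have hp : p0^2+p1^2+p2^2 = 4 := by
        have := hsum; rw [hα, hβ] at this; linarith [hq0, hq1, hq2]
      have hp4 : σ0^2*(p0^2+p1^2+p2^2) = σ0^2*4 := by rw [hp]
      have m1 : 0 ≤ (σ0^2-σ1^2)*p1^2 := mul_nonneg (by linarith) (sq_nonneg p1)
      have m2 : 0 ≤ (σ0^2-σ2^2)*p2^2 := mul_nonneg (by linarith) (sq_nonneg p2)
      have hX4 : X ≤ 4*σ0^2 := by rw [hX]; linarith [m1, m2, hp4]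
      rw [hB0, add_zero]
      linarith [hA2, hX4, sq_nonneg σ1]
    · -- both positive
      have C0 : β*p0^2 + α*q0^2 ≤ α*β := by
        have h : α*β - (β*p0^2 + α*q0^2) = (p1*q2 - p2*q1)^2 := by
          rw [hα, hβ]; linear_combination (p1*q1 + p2*q2 - p0*q0) * hdot
        linarith [sq_nonneg (p1*q2 - p2*q1), h]
      have C1 : β*p1^2 + α*q1^2 ≤ α*β := by
        have h : α*β - (β*p1^2 + α*q1^2) = (p0*q2 - p2*q0)^2 := by
          rw [hα, hβ]; linear_combination (p0*q0 + p2*q2 - p1*q1) * hdot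
        linarith [sq_nonneg (p0*q2 - p2*q0), h]
      have t0 : 0 ≤ (α*β - (β*p0^2 + α*q0^2)) * (σ0^2 - σ2^2) :=
        mul_nonneg (by linarith) (by linarith)
      have t1 : 0 ≤ (α*β - (β*p1^2 + α*q1^2)) * (σ1^2 - σ2^2) :=
        mul_nonneg (by linarith) (by linarith)
      have star_eq : (σ0^2+σ1^2)*(α*β) - (β*X + α*Y)
          = (α*β - (β*p0^2 + α*q0^2))*(σ0^2 - σ2^2)
            + (α*β - (β*p1^2 + α*q1^2))*(σ1^2 - σ2^2) := by
        rw [hα, hβ, hX, hY]; ring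
      have star : β*X + α*Y ≤ (σ0^2 + σ1^2) * (α*β) := by linarith
      have e1 : β^2*A^2 = β^2*X := by rw [hA2]
      have e2' : α^2*B^2 = α^2*Y := by rw [hB2]
      have e3 : α*β*A^2 = α*β*X := by rw [hA2]
      have e4 : α*β*B^2 = α*β*Y := by rw [hB2]
      have hsum' : α + β = 4 := hsum
      have e5 : (α+β)*(β*X + α*Y) = 4*(β*X + α*Y) := by rw [hsum']
      have key2 : α*β*((A+B)^2) ≤ 4*(β*X + α*Y) := by
        linarith [sq_nonneg (β*A - α*B), e1, e2', e3, e4, e5]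
      have h3 : α*β*((A+B)^2) ≤ α*β*(4*(σ0^2+σ1^2)) := by linarith [star, key2]
      exact le_of_mul_le_mul_left h3 (by positivity)
  linarith [goalsq, hs2]


/-- Horodecki: the maximal CHSH expectation of a two-qubit density
matrix ρ equals √(σ₁² + σ₂²), with σ₁ ≥ σ₂ the two largest singular values of the
correlation matrix R_{kl} = tr(ρ σ_k ⊗ σ_l). -/
theorem horodecki_chsh (ρ : Matrix (Fin 2 × Fin 2) (Fin 2 × Fin 2) ℂ)
    (hpsd : ρ.PosSemidef) (htr : ρ.trace = 1) (σ : Fin 3 → ℝ)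
    (hord : Antitone σ) (hpos : ∀ i, 0 ≤ σ i)
    (hsvd : ∃ U ∈ Matrix.orthogonalGroup (Fin 3) ℝ, ∃ V ∈ Matrix.orthogonalGroup (Fin 3) ℝ,
      corr ρ = U * Matrix.diagonal σ * Vᵀ) :
    IsGreatest (betaSet ρ) (Real.sqrt (σ 0 ^ 2 + σ 1 ^ 2)) := by
  obtain ⟨U, hU, V, hV, hR⟩ := hsvd
  have hUt : Uᵀ * U = 1 := orth_tt hU
  have hVt : Vᵀ * V = 1 := orth_tt hV
  have hVt' : V * Vᵀ = 1 := orth_tt' hV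
  have h01 : σ 1 ≤ σ 0 := hord (by decide)
  have h12 : σ 2 ≤ σ 1 := hord (by decide)
  constructor
  · -- membership
    by_cases hσ : σ 0 = 0
    · -- all singular values zero
      have hz : ∀ i, σ i = 0 := fun i =>
        le_antisymm (hσ ▸ hord (Fin.zero_le i)) (hpos i)
      have hR0 : corr ρ = 0 := by
        rw [hR]
        have : Matrix.diagonal σ = 0 := by
          have : σ = fun _ => (0:ℝ) := funext hz
          rw [this]; simp
        rw [this]; simp
      refine ⟨![1,0,0], ![1,0,0], ![1,0,0], ![1,0,0], ?_, ?_, ?_, ?_, ?_⟩ <;>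
        try (simp [unitVec, Fin.sum_univ_three])
      rw [trace_bell, hR0, hσ, hz 1]
      simp
    · -- σ 0 > 0
      have h0 : 0 < σ 0 := lt_of_le_of_ne (hpos 0) (Ne.symm hσ)
      set s := Real.sqrt (σ 0 ^ 2 + σ 1 ^ 2) with hsdef
      have hs2 : s^2 = σ 0^2 + σ 1^2 := Real.sq_sqrt (by positivity)
      have hs : 0 < s := Real.sqrt_pos.2 (by positivity)
      refine ⟨U.mulVec ![1,0,0], U.mulVec ![0,1,0],
        V.mulVec ![σ 0/s, σ 1/s, 0], V.mulVec ![σ 0/s, -(σ 1/s), 0], ?_, ?_, ?_, ?_, ?_⟩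
      · show ∑ i, (U.mulVec ![1,0,0] i)^2 = 1
        have : ∑ i, (U.mulVec ![1,0,0] i)^2 = U.mulVec ![1,0,0] ⬝ᵥ U.mulVec ![1,0,0] := by
          simp [dotProduct, sq]
        rw [this, orthdot U hUt]
        simp [dotProduct, Fin.sum_univ_three]
      · show ∑ i, (U.mulVec ![0,1,0] i)^2 = 1
        have : ∑ i, (U.mulVec ![0,1,0] i)^2 = U.mulVec ![0,1,0] ⬝ᵥ U.mulVec ![0,1,0] := by
          simp [dotProduct, sq]
        rw [this, orthdot U hUt]
        simp [dotProduct, Fin.sum_univ_three]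
      · show ∑ i, (V.mulVec ![σ 0/s, σ 1/s, 0] i)^2 = 1
        have : ∑ i, (V.mulVec ![σ 0/s, σ 1/s, 0] i)^2
            = V.mulVec ![σ 0/s, σ 1/s, 0] ⬝ᵥ V.mulVec ![σ 0/s, σ 1/s, 0] := by
          simp [dotProduct, sq]
        rw [this, orthdot V hVt]
        simp only [dotProduct, Fin.sum_univ_three]
        simp only [Matrix.cons_val_zero, Matrix.cons_val_one, Matrix.head_cons,
          Matrix.cons_val_two, Matrix.tail_cons]
        field_simp
        linarith [hs2]
      · show ∑ i, (V.mulVec ![σ 0/s, -(σ 1/s), 0] i)^2 = 1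
        have : ∑ i, (V.mulVec ![σ 0/s, -(σ 1/s), 0] i)^2
            = V.mulVec ![σ 0/s, -(σ 1/s), 0] ⬝ᵥ V.mulVec ![σ 0/s, -(σ 1/s), 0] := by
          simp [dotProduct, sq]
        rw [this, orthdot V hVt]
        simp only [dotProduct, Fin.sum_univ_three]
        simp only [Matrix.cons_val_zero, Matrix.cons_val_one, Matrix.head_cons,
          Matrix.cons_val_two, Matrix.tail_cons]
        field_simp
        linarith [hs2]
      · -- the value equals s
        rw [trace_bell]
        have split : ∑ i, ∑ j, (U.mulVec ![1,0,0] i *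
              (V.mulVec ![σ 0/s, σ 1/s, 0] j + V.mulVec ![σ 0/s, -(σ 1/s), 0] j)
            + U.mulVec ![0,1,0] i *
              (V.mulVec ![σ 0/s, σ 1/s, 0] j - V.mulVec ![σ 0/s, -(σ 1/s), 0] j)) * corr ρ i j
            = U.mulVec ![1,0,0] ⬝ᵥ (corr ρ).mulVec (V.mulVec ![2*(σ 0/s), 0, 0])
              + U.mulVec ![0,1,0] ⬝ᵥ (corr ρ).mulVec (V.mulVec ![0, 2*(σ 1/s), 0]) := by
          have hu : (fun j => V.mulVec ![σ 0/s, σ 1/s, 0] j + V.mulVec ![σ 0/s, -(σ 1/s), 0] j)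
              = V.mulVec ![2*(σ 0/s), 0, 0] := by
            funext j
            simp only [Matrix.mulVec, dotProduct, Fin.sum_univ_three,
              Matrix.cons_val_zero, Matrix.cons_val_one, Matrix.head_cons,
              Matrix.cons_val_two, Matrix.tail_cons]
            ring
          have hv : (fun j => V.mulVec ![σ 0/s, σ 1/s, 0] j - V.mulVec ![σ 0/s, -(σ 1/s), 0] j)
              = V.mulVec ![0, 2*(σ 1/s), 0] := by
            funext j
            simp only [Matrix.mulVec, dotProduct, Fin.sum_univ_three,
              Matrix.cons_val_zero, Matrix.cons_val_one, Matrix.head_cons,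
              Matrix.cons_val_two, Matrix.tail_cons]
            ring
          rw [← hu, ← hv, ← dsum, ← dsum, ← Finset.sum_add_distrib]
          refine Finset.sum_congr rfl fun i _ => ?_
          rw [← Finset.sum_add_distrib]
          refine Finset.sum_congr rfl fun j _ => ?_
          ring
        rw [split]
        have hmv : ∀ z : Fin 3 → ℝ, (corr ρ).mulVec (V.mulVec z)
            = U.mulVec ((Matrix.diagonal σ).mulVec z) := by
          intro z
          rw [hR, Matrix.mulVec_mulVec, Matrix.mul_assoc (U * Matrix.diagonal σ) Vᵀ V, hVt,
            Matrix.mul_one, ← Matrix.mulVec_mulVec]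
        rw [hmv, hmv, orthdot U hUt, orthdot U hUt]
        simp only [dotProduct, Fin.sum_univ_three, Matrix.mulVec_diagonal,
          Matrix.cons_val_zero, Matrix.cons_val_one, Matrix.head_cons,
          Matrix.cons_val_two, Matrix.tail_cons]
        field_simp
        nlinarith [hs2, hs]
  · -- upper bound
    rintro t ⟨a, b, c, d, ha, hb, hc, hd, rfl⟩
    rw [trace_bell]
    set u : Fin 3 → ℝ := fun j => c j + d j with hu
    set v : Fin 3 → ℝ := fun j => c j - d j with hv
    have split : ∑ i, ∑ j, (a i * (c j + d j) + b i * (c j - d j)) * corr ρ i j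
        = a ⬝ᵥ (corr ρ).mulVec u + b ⬝ᵥ (corr ρ).mulVec v := by
      rw [← dsum, ← dsum, ← Finset.sum_add_distrib]
      refine Finset.sum_congr rfl fun i _ => ?_
      rw [← Finset.sum_add_distrib]
      refine Finset.sum_congr rfl fun j _ => ?_
      simp only [hu, hv]
      ring
    rw [split]
    -- Cauchy-Schwarz bounds
    have cs : ∀ (w y : Fin 3 → ℝ), unitVec w → w ⬝ᵥ y ≤ Real.sqrt (∑ i, (y i)^2) := by
      intro w y hw
      apply le_sqrt_of_sq_le'
      have h := Finset.sum_mul_sq_le_sq_mul_sq Finset.univ w y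
      have hw' : ∑ i, w i ^2 = 1 := hw
      calc (w ⬝ᵥ y)^2 = (∑ i, w i * y i)^2 := rfl
        _ ≤ (∑ i, w i ^2) * (∑ i, y i ^2) := h
        _ = ∑ i, (y i)^2 := by rw [hw']; ring
    have bd1 := cs a ((corr ρ).mulVec u) ha
    have bd2 := cs b ((corr ρ).mulVec v) hb
    -- quadratic forms
    set p : Fin 3 → ℝ := Vᵀ.mulVec u with hp
    set q : Fin 3 → ℝ := Vᵀ.mulVec v with hq
    have q1 : ∑ i, ((corr ρ).mulVec u i)^2 = ∑ i, σ i ^2 * (p i)^2 :=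
      quad (corr ρ) U V σ hUt hR u
    have q2 : ∑ i, ((corr ρ).mulVec v i)^2 = ∑ i, σ i ^2 * (q i)^2 :=
      quad (corr ρ) U V σ hUt hR v
    rw [q1] at bd1
    rw [q2] at bd2
    -- orthogonality facts for p, q
    have hVtt : Vᵀᵀ * Vᵀ = 1 := by rw [Matrix.transpose_transpose]; exact hVt'
    have hdotpq : p ⬝ᵥ q = u ⬝ᵥ v := orthdot Vᵀ hVtt u v
    have hpp : p ⬝ᵥ p = u ⬝ᵥ u := orthdot Vᵀ hVtt u u
    have hqq : q ⬝ᵥ q = v ⬝ᵥ v := orthdot Vᵀ hVtt v v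
    have hc' : c 0^2 + c 1^2 + c 2^2 = 1 := by
      have := hc; rwa [unitVec, Fin.sum_univ_three] at this
    have hd' : d 0^2 + d 1^2 + d 2^2 = 1 := by
      have := hd; rwa [unitVec, Fin.sum_univ_three] at this
    have hdot0 : p 0 * q 0 + p 1 * q 1 + p 2 * q 2 = 0 := by
      have h1 : p ⬝ᵥ q = p 0 * q 0 + p 1 * q 1 + p 2 * q 2 := by
        simp [dotProduct, Fin.sum_univ_three]
      have h2 : u ⬝ᵥ v = (c 0^2 + c 1^2 + c 2^2) - (d 0^2 + d 1^2 + d 2^2) := by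
        simp only [dotProduct, Fin.sum_univ_three, hu, hv]
        ring
      rw [← h1, hdotpq, h2, hc', hd']
      ring
    have hsum4 : (p 0^2 + p 1^2 + p 2^2) + (q 0^2 + q 1^2 + q 2^2) = 4 := by
      have h1 : p ⬝ᵥ p = p 0^2 + p 1^2 + p 2^2 := by
        simp [dotProduct, Fin.sum_univ_three, sq]
      have h2 : q ⬝ᵥ q = q 0^2 + q 1^2 + q 2^2 := by
        simp [dotProduct, Fin.sum_univ_three, sq]
      have h3 : u ⬝ᵥ u + v ⬝ᵥ v
          = 2*(c 0^2 + c 1^2 + c 2^2) + 2*(d 0^2 + d 1^2 + d 2^2) := by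
        simp only [dotProduct, Fin.sum_univ_three, hu, hv]
        ring
      rw [← h1, ← h2, hpp, hqq, h3, hc', hd']
      ring
    have key := key_ineq (σ 0) (σ 1) (σ 2) (p 0) (p 1) (p 2) (q 0) (q 1) (q 2)
      h01 h12 (hpos 2) hdot0 hsum4
    have e1 : ∑ i, σ i ^2 * (p i)^2
        = σ 0^2*(p 0)^2 + σ 1^2*(p 1)^2 + σ 2^2*(p 2)^2 := Fin.sum_univ_three _
    have e2 : ∑ i, σ i ^2 * (q i)^2
        = σ 0^2*(q 0)^2 + σ 1^2*(q 1)^2 + σ 2^2*(q 2)^2 := Fin.sum_univ_three _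
    rw [e1] at bd1
    rw [e2] at bd2
    linarith [bd1, bd2, key]
end
end

section
/- For a pure state |ψ⟩ of two qubits with concurrence C, the maximal CHSH expectation β(|ψ⟩⟨ψ|) equals √(1 + C²). -/
open Matrix Kronecker BigOperators ComplexOrder

noncomputable section

private lemma cs3 (a0 a1 a2 v0 v1 v2 : ℝ) (ha : a0^2+a1^2+a2^2 = 1) :
    a0*v0+a1*v1+a2*v2 ≤ Real.sqrt (v0^2+v1^2+v2^2) := by
  have h2 : (a0*v0+a1*v1+a2*v2)^2 ≤ v0^2+v1^2+v2^2 := by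
    nlinarith [sq_nonneg (a0*v1-a1*v0), sq_nonneg (a0*v2-a2*v0), sq_nonneg (a1*v2-a2*v1)]
  calc a0*v0+a1*v1+a2*v2 ≤ |a0*v0+a1*v1+a2*v2| := le_abs_self _
    _ = Real.sqrt ((a0*v0+a1*v1+a2*v2)^2) := (Real.sqrt_sq_eq_abs _).symm
    _ ≤ Real.sqrt (v0^2+v1^2+v2^2) := Real.sqrt_le_sqrt h2

private lemma keyineq (C2 nu nw s t : ℝ) (h1 : 0 ≤ C2)
    (h5 : nu + nw = 4)
    (h8 : s*nw + t*nu ≤ (1-C2)*(nu*nw)) :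
    (C2*nu+s)*(C2*nw+t) ≤ (2-(s+t)/2)^2 := by
  have hE : 0 ≤ (1-C2)*(nu*nw) - (s*nw + t*nu) := by linarith
  have e1 : C2*(nu*nw) + s*t - (C2*nu+s)*(C2*nw+t)
      = C2*((1-C2)*(nu*nw) - (s*nw + t*nu)) := by ring
  have e2 : (nu - s)*(nw - t) - (C2*(nu*nw) + s*t)
      = (1-C2)*(nu*nw) - (s*nw + t*nu) := by ring
  have step3 : (nu - s)*(nw - t) ≤ (2-(s+t)/2)^2 := by
    have h5' : nw = 4 - nu := by linarith
    subst h5'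
    nlinarith [sq_nonneg (nu - s - (4 - nu) + t)]
  nlinarith [mul_nonneg h1 hE, e1, e2, hE, step3]

private lemma sqrtcomb (C2 nu nw s t : ℝ) (hC2 : 0 ≤ C2) (hC21 : C2 ≤ 1)
    (hnu : 0 ≤ nu) (hnw : 0 ≤ nw) (hs : 0 ≤ s) (ht : 0 ≤ t) (h5 : nu + nw = 4)
    (hG : s*nw + t*nu ≤ (1-C2)*(nu*nw)) (hg1 : s ≤ (1-C2)*nu) (hg2 : t ≤ (1-C2)*nw) :
    Real.sqrt (C2*nu+s) + Real.sqrt (C2*nw+t) ≤ 2*Real.sqrt (1+C2) := by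
  have key := keyineq C2 nu nw s t hC2 h5 hG
  have hsA0 : (0:ℝ) ≤ C2*nu+s := by positivity
  have hsB0 : (0:ℝ) ≤ C2*nw+t := by positivity
  have hK0 : (0:ℝ) ≤ 2 - (s+t)/2 := by
    nlinarith [mul_nonneg (sub_nonneg.2 hC21) hnu, mul_nonneg (sub_nonneg.2 hC21) hnw]
  have hsqrtMul : Real.sqrt ((C2*nu+s)*(C2*nw+t)) ≤ 2 - (s+t)/2 := by
    calc Real.sqrt ((C2*nu+s)*(C2*nw+t)) ≤ Real.sqrt ((2-(s+t)/2)^2) := Real.sqrt_le_sqrt key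
      _ = 2 - (s+t)/2 := Real.sqrt_sq hK0
  have hs2 : (Real.sqrt (C2*nu+s) + Real.sqrt (C2*nw+t))^2 ≤ (2*Real.sqrt (1+C2))^2 := by
    have e : (Real.sqrt (C2*nu+s) + Real.sqrt (C2*nw+t))^2
        = (C2*nu+s) + (C2*nw+t) + 2*Real.sqrt ((C2*nu+s)*(C2*nw+t)) := by
      rw [add_sq, Real.sq_sqrt hsA0, Real.sq_sqrt hsB0, mul_assoc, ← Real.sqrt_mul hsA0]; ring
    have e2 : (2*Real.sqrt (1+C2))^2 = 4*(1+C2) := by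
      rw [mul_pow, Real.sq_sqrt (by positivity : (0:ℝ) ≤ 1+C2)]; norm_num
    rw [e, e2]
    nlinarith [hsqrtMul, h5]
  have h1 : (0:ℝ) ≤ Real.sqrt (C2*nu+s) + Real.sqrt (C2*nw+t) := by positivity
  have h2 : (0:ℝ) ≤ 2*Real.sqrt (1+C2) := by positivity
  nlinarith [hs2, h1, h2]

set_option maxHeartbeats 3000000 in
private lemma bessel3 (C r0 r1 r2 u0 u1 u2 w0 w1 w2 : ℝ)
    (hr : r0^2 + r1^2 + r2^2 = 1 - C^2)
    (huw : u0*w0+u1*w1+u2*w2 = 0) :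
    (r0*u0+r1*u1+r2*u2)^2*(w0^2+w1^2+w2^2) + (r0*w0+r1*w1+r2*w2)^2*(u0^2+u1^2+u2^2)
      ≤ (1-C^2)*((u0^2+u1^2+u2^2)*(w0^2+w1^2+w2^2)) := by
  have E1 : (1-C^2)*((u0^2+u1^2+u2^2)*(w0^2+w1^2+w2^2)) - (r0*u0+r1*u1+r2*u2)^2*(w0^2+w1^2+w2^2)
      - (r0*w0+r1*w1+r2*w2)^2*(u0^2+u1^2+u2^2)
      - (r0*(u1*w2-u2*w1)+r1*(u2*w0-u0*w2)+r2*(u0*w1-u1*w0))^2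
      = (-1*r2^2*u2*w2 + r2^2*u1*w1 + r2^2*u0*w0 + -2*r1*r2*u2*w1 + -2*r1*r2*u1*w2 + r1^2*u2*w2 + -1*r1^2*u1*w1 + r1^2*u0*w0 + -2*r0*r2*u2*w0 + -2*r0*r2*u0*w2 + -2*r0*r1*u1*w0 + -2*r0*r1*u0*w1 + r0^2*u2*w2 + r0^2*u1*w1 + -1*r0^2*u0*w0) * (u0*w0+u1*w1+u2*w2) := by
    linear_combination (-((u0^2+u1^2+u2^2)*(w0^2+w1^2+w2^2))) * hr
  rw [huw, mul_zero] at E1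
  nlinarith [sq_nonneg (r0*(u1*w2-u2*w1)+r1*(u2*w0-u0*w2)+r2*(u0*w1-u1*w0)), E1]

private lemma lag3 (C r0 r1 r2 u0 u1 u2 : ℝ)
    (hr : r0^2 + r1^2 + r2^2 = 1 - C^2) :
    (r0*u0+r1*u1+r2*u2)^2 ≤ (1-C^2)*(u0^2+u1^2+u2^2) := by
  nlinarith [sq_nonneg (r1*u2-r2*u1), sq_nonneg (r2*u0-r0*u2), sq_nonneg (r0*u1-r1*u0),
    sq_nonneg u0, sq_nonneg u1, sq_nonneg u2]

set_option maxHeartbeats 2000000 in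
theorem upper_aux (C : ℝ) (hCpos : 0 ≤ C)
    (R00 R01 R02 R10 R11 R12 R20 R21 R22 r0 r1 r2 : ℝ)
    (h00 : R00^2 + R10^2 + R20^2 = C^2 + r0^2)
    (h11 : R01^2 + R11^2 + R21^2 = C^2 + r1^2)
    (h22 : R02^2 + R12^2 + R22^2 = C^2 + r2^2)
    (h01 : R00*R01 + R10*R11 + R20*R21 = r0*r1)
    (h02 : R00*R02 + R10*R12 + R20*R22 = r0*r2)
    (h12 : R01*R02 + R11*R12 + R21*R22 = r1*r2)
    (hr : r0^2 + r1^2 + r2^2 = 1 - C^2)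
    (a0 a1 a2 b0 b1 b2 c0 c1 c2 d0 d1 d2 : ℝ)
    (ha : a0^2+a1^2+a2^2 = 1) (hb : b0^2+b1^2+b2^2 = 1)
    (hc : c0^2+c1^2+c2^2 = 1) (hd : d0^2+d1^2+d2^2 = 1) :
    (1/2)*((a0*(c0+d0)+b0*(c0-d0))*R00 + (a0*(c1+d1)+b0*(c1-d1))*R01 + (a0*(c2+d2)+b0*(c2-d2))*R02 + (a1*(c0+d0)+b1*(c0-d0))*R10 + (a1*(c1+d1)+b1*(c1-d1))*R11 + (a1*(c2+d2)+b1*(c2-d2))*R12 + (a2*(c0+d0)+b2*(c0-d0))*R20 + (a2*(c1+d1)+b2*(c1-d1))*R21 + (a2*(c2+d2)+b2*(c2-d2))*R22) ≤ Real.sqrt (1+C^2) := by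
  have hC21 : C^2 ≤ 1 := by nlinarith [sq_nonneg r0, sq_nonneg r1, sq_nonneg r2]
  have huw : (c0+d0)*(c0-d0)+(c1+d1)*(c1-d1)+(c2+d2)*(c2-d2) = 0 := by linear_combination hc - hd
  have hnuw : ((c0+d0)^2+(c1+d1)^2+(c2+d2)^2) + ((c0-d0)^2+(c1-d1)^2+(c2-d2)^2) = 4 := by linear_combination 2*hc + 2*hd
  have hnu : (0:ℝ) ≤ (c0+d0)^2+(c1+d1)^2+(c2+d2)^2 := by positivity
  have hnw : (0:ℝ) ≤ (c0-d0)^2+(c1-d1)^2+(c2-d2)^2 := by positivity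
  have hsA : ((R00*(c0+d0)+R01*(c1+d1)+R02*(c2+d2)))^2+((R10*(c0+d0)+R11*(c1+d1)+R12*(c2+d2)))^2+((R20*(c0+d0)+R21*(c1+d1)+R22*(c2+d2)))^2 = C^2*((c0+d0)^2+(c1+d1)^2+(c2+d2)^2) + (r0*(c0+d0)+r1*(c1+d1)+r2*(c2+d2))^2 := by
    linear_combination ((c0+d0))^2*h00 + ((c1+d1))^2*h11 + ((c2+d2))^2*h22 + (2*(c0+d0)*(c1+d1))*h01 + (2*(c0+d0)*(c2+d2))*h02 + (2*(c1+d1)*(c2+d2))*h12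
  have hsB : ((R00*(c0-d0)+R01*(c1-d1)+R02*(c2-d2)))^2+((R10*(c0-d0)+R11*(c1-d1)+R12*(c2-d2)))^2+((R20*(c0-d0)+R21*(c1-d1)+R22*(c2-d2)))^2 = C^2*((c0-d0)^2+(c1-d1)^2+(c2-d2)^2) + (r0*(c0-d0)+r1*(c1-d1)+r2*(c2-d2))^2 := by
    linear_combination ((c0-d0))^2*h00 + ((c1-d1))^2*h11 + ((c2-d2))^2*h22 + (2*(c0-d0)*(c1-d1))*h01 + (2*(c0-d0)*(c2-d2))*h02 + (2*(c1-d1)*(c2-d2))*h12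
  have hG := bessel3 C r0 r1 r2 (c0+d0) (c1+d1) (c2+d2) (c0-d0) (c1-d1) (c2-d2) hr huw
  have hg1 := lag3 C r0 r1 r2 (c0+d0) (c1+d1) (c2+d2) hr
  have hg2 := lag3 C r0 r1 r2 (c0-d0) (c1-d1) (c2-d2) hr
  have hsum := sqrtcomb (C^2) ((c0+d0)^2+(c1+d1)^2+(c2+d2)^2) ((c0-d0)^2+(c1-d1)^2+(c2-d2)^2) ((r0*(c0+d0)+r1*(c1+d1)+r2*(c2+d2))^2) ((r0*(c0-d0)+r1*(c1-d1)+r2*(c2-d2))^2)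
    (sq_nonneg C) hC21 hnu hnw (sq_nonneg _) (sq_nonneg _) hnuw hG hg1 hg2
  have hA : a0*((R00*(c0+d0)+R01*(c1+d1)+R02*(c2+d2)))+a1*((R10*(c0+d0)+R11*(c1+d1)+R12*(c2+d2)))+a2*((R20*(c0+d0)+R21*(c1+d1)+R22*(c2+d2)))
      ≤ Real.sqrt (C^2*((c0+d0)^2+(c1+d1)^2+(c2+d2)^2) + (r0*(c0+d0)+r1*(c1+d1)+r2*(c2+d2))^2) := by
    have h := cs3 a0 a1 a2 ((R00*(c0+d0)+R01*(c1+d1)+R02*(c2+d2))) ((R10*(c0+d0)+R11*(c1+d1)+R12*(c2+d2))) ((R20*(c0+d0)+R21*(c1+d1)+R22*(c2+d2))) ha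
    rwa [hsA] at h
  have hB : b0*((R00*(c0-d0)+R01*(c1-d1)+R02*(c2-d2)))+b1*((R10*(c0-d0)+R11*(c1-d1)+R12*(c2-d2)))+b2*((R20*(c0-d0)+R21*(c1-d1)+R22*(c2-d2)))
      ≤ Real.sqrt (C^2*((c0-d0)^2+(c1-d1)^2+(c2-d2)^2) + (r0*(c0-d0)+r1*(c1-d1)+r2*(c2-d2))^2) := by
    have h := cs3 b0 b1 b2 ((R00*(c0-d0)+R01*(c1-d1)+R02*(c2-d2))) ((R10*(c0-d0)+R11*(c1-d1)+R12*(c2-d2))) ((R20*(c0-d0)+R21*(c1-d1)+R22*(c2-d2))) hb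
    rwa [hsB] at h
  have hval : (1/2)*((a0*(c0+d0)+b0*(c0-d0))*R00 + (a0*(c1+d1)+b0*(c1-d1))*R01 + (a0*(c2+d2)+b0*(c2-d2))*R02 + (a1*(c0+d0)+b1*(c0-d0))*R10 + (a1*(c1+d1)+b1*(c1-d1))*R11 + (a1*(c2+d2)+b1*(c2-d2))*R12 + (a2*(c0+d0)+b2*(c0-d0))*R20 + (a2*(c1+d1)+b2*(c1-d1))*R21 + (a2*(c2+d2)+b2*(c2-d2))*R22)
      = (1/2)*((a0*((R00*(c0+d0)+R01*(c1+d1)+R02*(c2+d2)))+a1*((R10*(c0+d0)+R11*(c1+d1)+R12*(c2+d2)))+a2*((R20*(c0+d0)+R21*(c1+d1)+R22*(c2+d2))))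
        + (b0*((R00*(c0-d0)+R01*(c1-d1)+R02*(c2-d2)))+b1*((R10*(c0-d0)+R11*(c1-d1)+R12*(c2-d2)))+b2*((R20*(c0-d0)+R21*(c1-d1)+R22*(c2-d2))))) := by
    ring
  rw [hval]
  linarith [hA, hB, hsum]


private lemma frame3 (r0 r1 r2 : ℝ) :
    ∃ u0 u1 u2 w0 w1 w2 : ℝ,
      u0^2+u1^2+u2^2 = 1 ∧ w0^2+w1^2+w2^2 = 1 ∧
      u0*w0+u1*w1+u2*w2 = 0 ∧ r0*w0+r1*w1+r2*w2 = 0 ∧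
      (r0*u0+r1*u1+r2*u2)^2 = r0^2+r1^2+r2^2 := by
  by_cases hz : r0^2+r1^2+r2^2 = 0
  · have h0 : r0 = 0 := by nlinarith [sq_nonneg r0, sq_nonneg r1, sq_nonneg r2]
    have h1 : r1 = 0 := by nlinarith [sq_nonneg r0, sq_nonneg r1, sq_nonneg r2]
    have h2 : r2 = 0 := by nlinarith [sq_nonneg r0, sq_nonneg r1, sq_nonneg r2]
    refine ⟨1,0,0,0,1,0, by norm_num, by norm_num, by norm_num, ?_, ?_⟩
    · rw [h0,h1,h2]; ring
    · rw [h0,h1,h2]; ring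
  · have hpos : 0 < r0^2+r1^2+r2^2 := lt_of_le_of_ne (by positivity) (Ne.symm hz)
    have hρ2 : (Real.sqrt (r0^2+r1^2+r2^2))^2 = r0^2+r1^2+r2^2 := Real.sq_sqrt hpos.le
    have hρpos : 0 < Real.sqrt (r0^2+r1^2+r2^2) := Real.sqrt_pos.2 hpos
    have hρne : Real.sqrt (r0^2+r1^2+r2^2) ≠ 0 := ne_of_gt hρpos
    set ρ := Real.sqrt (r0^2+r1^2+r2^2)
    have hu : (r0/ρ)^2+(r1/ρ)^2+(r2/ρ)^2 = 1 := by
      field_simp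
      linear_combination -hρ2
    have hru : (r0*(r0/ρ)+r1*(r1/ρ)+r2*(r2/ρ))^2 = r0^2+r1^2+r2^2 := by
      field_simp
      linear_combination -hρ2
    by_cases hz2 : r0^2+r1^2 = 0
    · have h0 : r0 = 0 := by nlinarith [sq_nonneg r0, sq_nonneg r1]
      have h1 : r1 = 0 := by nlinarith [sq_nonneg r0, sq_nonneg r1]
      refine ⟨r0/ρ, r1/ρ, r2/ρ, 1, 0, 0, hu, by norm_num, ?_, ?_, hru⟩
      · rw [h0]; ring
      · rw [h0]; ring
    · have hpos2 : 0 < r0^2+r1^2 := lt_of_le_of_ne (by positivity) (Ne.symm hz2)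
      have hτ2 : (Real.sqrt (r0^2+r1^2))^2 = r0^2+r1^2 := Real.sq_sqrt hpos2.le
      have hτne : Real.sqrt (r0^2+r1^2) ≠ 0 := ne_of_gt (Real.sqrt_pos.2 hpos2)
      set τ := Real.sqrt (r0^2+r1^2)
      refine ⟨r0/ρ, r1/ρ, r2/ρ, r1/τ, -(r0/τ), 0, hu, ?_, by ring, by ring, hru⟩
      field_simp
      linear_combination -hτ2

set_option maxHeartbeats 2000000 in
theorem lower_aux (C : ℝ) (hCpos : 0 ≤ C)
    (R00 R01 R02 R10 R11 R12 R20 R21 R22 r0 r1 r2 : ℝ)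
    (h00 : R00^2 + R10^2 + R20^2 = C^2 + r0^2)
    (h11 : R01^2 + R11^2 + R21^2 = C^2 + r1^2)
    (h22 : R02^2 + R12^2 + R22^2 = C^2 + r2^2)
    (h01 : R00*R01 + R10*R11 + R20*R21 = r0*r1)
    (h02 : R00*R02 + R10*R12 + R20*R22 = r0*r2)
    (h12 : R01*R02 + R11*R12 + R21*R22 = r1*r2)
    (hr : r0^2 + r1^2 + r2^2 = 1 - C^2) :
    ∃ a0 a1 a2 b0 b1 b2 c0 c1 c2 d0 d1 d2 : ℝ,
      a0^2+a1^2+a2^2 = 1 ∧ b0^2+b1^2+b2^2 = 1 ∧ c0^2+c1^2+c2^2 = 1 ∧ d0^2+d1^2+d2^2 = 1 ∧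
      (1/2)*((a0*(c0+d0)+b0*(c0-d0))*R00 + (a0*(c1+d1)+b0*(c1-d1))*R01 + (a0*(c2+d2)+b0*(c2-d2))*R02 + (a1*(c0+d0)+b1*(c0-d0))*R10 + (a1*(c1+d1)+b1*(c1-d1))*R11 + (a1*(c2+d2)+b1*(c2-d2))*R12 + (a2*(c0+d0)+b2*(c0-d0))*R20 + (a2*(c1+d1)+b2*(c1-d1))*R21 + (a2*(c2+d2)+b2*(c2-d2))*R22)
        = Real.sqrt (1+C^2) := by
  obtain ⟨u0,u1,u2,w0,w1,w2,huu,hww,huw,hrw,hru⟩ := frame3 r0 r1 r2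
  have hs1pos : (0:ℝ) < Real.sqrt (1+C^2) := Real.sqrt_pos.2 (by positivity)
  have hs1 : (Real.sqrt (1+C^2))^2 = 1+C^2 := Real.sq_sqrt (by positivity)
  have hs1ne : Real.sqrt (1+C^2) ≠ 0 := ne_of_gt hs1pos
  set s1 := Real.sqrt (1+C^2) with hs1def
  have hvu : ((R00*u0+R01*u1+R02*u2))^2+((R10*u0+R11*u1+R12*u2))^2+((R20*u0+R21*u1+R22*u2))^2 = 1 := by
    linear_combination u0^2*h00 + u1^2*h11 + u2^2*h22 + (2*u0*u1)*h01 + (2*u0*u2)*h02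
      + (2*u1*u2)*h12 + C^2*huu + hru + hr
  have hvw : ((R00*w0+R01*w1+R02*w2))^2+((R10*w0+R11*w1+R12*w2))^2+((R20*w0+R21*w1+R22*w2))^2 = C^2 := by
    linear_combination w0^2*h00 + w1^2*h11 + w2^2*h22 + (2*w0*w1)*h01 + (2*w0*w2)*h02
      + (2*w1*w2)*h12 + C^2*hww + (r0*w0+r1*w1+r2*w2)*hrw
  by_cases hC0 : C = 0
  · subst hC0
    refine ⟨(R00*u0+R01*u1+R02*u2), (R10*u0+R11*u1+R12*u2), (R20*u0+R21*u1+R22*u2), (R00*u0+R01*u1+R02*u2), (R10*u0+R11*u1+R12*u2), (R20*u0+R21*u1+R22*u2), u0, u1, u2, u0, u1, u2,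
      hvu, hvu, huu, huu, ?_⟩
    have h1 : Real.sqrt (1+(0:ℝ)^2) = 1 := by norm_num
    rw [hs1def, h1]
    linear_combination hvu
  · refine ⟨(R00*u0+R01*u1+R02*u2), (R10*u0+R11*u1+R12*u2), (R20*u0+R21*u1+R22*u2), ((R00*w0+R01*w1+R02*w2)/C), ((R10*w0+R11*w1+R12*w2)/C), ((R20*w0+R21*w1+R22*w2)/C),
      ((u0 + C*w0)/s1), ((u1 + C*w1)/s1), ((u2 + C*w2)/s1), ((u0 - C*w0)/s1), ((u1 - C*w1)/s1), ((u2 - C*w2)/s1),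
      hvu, ?_, ?_, ?_, ?_⟩
    · field_simp
      linear_combination hvw
    · field_simp
      linear_combination huu + C^2*hww + (2*C)*huw - hs1
    · field_simp
      linear_combination huu + C^2*hww - (2*C)*huw - hs1
    · field_simp
      linear_combination (2*C)*hvu + (2*C)*hvw - (2*C)*hs1

private lemma eR00 (ψ : Fin 2 × Fin 2 → ℂ) :
    (Matrix.trace (Matrix.vecMulVec ψ (star ψ) * (pauli 0 ⊗ₖ pauli 0))).re
    = 2*(ψ (0,1)).im*(ψ (1,0)).im + 2*(ψ (0,1)).re*(ψ (1,0)).re + 2*(ψ (0,0)).im*(ψ (1,1)).im + 2*(ψ (0,0)).re*(ψ (1,1)).re := by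
  simp [Matrix.trace, Matrix.mul_apply, Fintype.sum_prod_type, Fin.sum_univ_two, Matrix.vecMulVec_apply, pauli, Matrix.kroneckerMap_apply, Matrix.diag, Matrix.cons_val', Matrix.cons_val_zero, Matrix.cons_val_one, Matrix.head_cons, Matrix.empty_val', Matrix.cons_val_fin_one, Matrix.head_fin_const, Complex.add_re, Complex.mul_re, Complex.mul_im, Complex.add_im]
  ring

private lemma eR01 (ψ : Fin 2 × Fin 2 → ℂ) :
    (Matrix.trace (Matrix.vecMulVec ψ (star ψ) * (pauli 0 ⊗ₖ pauli 1))).re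
    = 2*(ψ (0,1)).im*(ψ (1,0)).re + (-2)*(ψ (0,1)).re*(ψ (1,0)).im + (-2)*(ψ (0,0)).im*(ψ (1,1)).re + 2*(ψ (0,0)).re*(ψ (1,1)).im := by
  simp [Matrix.trace, Matrix.mul_apply, Fintype.sum_prod_type, Fin.sum_univ_two, Matrix.vecMulVec_apply, pauli, Matrix.kroneckerMap_apply, Matrix.diag, Matrix.cons_val', Matrix.cons_val_zero, Matrix.cons_val_one, Matrix.head_cons, Matrix.empty_val', Matrix.cons_val_fin_one, Matrix.head_fin_const, Complex.add_re, Complex.mul_re, Complex.mul_im, Complex.add_im]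
  ring

private lemma eR02 (ψ : Fin 2 × Fin 2 → ℂ) :
    (Matrix.trace (Matrix.vecMulVec ψ (star ψ) * (pauli 0 ⊗ₖ pauli 2))).re
    = (-2)*(ψ (0,1)).im*(ψ (1,1)).im + (-2)*(ψ (0,1)).re*(ψ (1,1)).re + 2*(ψ (0,0)).im*(ψ (1,0)).im + 2*(ψ (0,0)).re*(ψ (1,0)).re := by
  simp [Matrix.trace, Matrix.mul_apply, Fintype.sum_prod_type, Fin.sum_univ_two, Matrix.vecMulVec_apply, pauli, Matrix.kroneckerMap_apply, Matrix.diag, Matrix.cons_val', Matrix.cons_val_zero, Matrix.cons_val_one, Matrix.head_cons, Matrix.empty_val', Matrix.cons_val_fin_one, Matrix.head_fin_const, Complex.add_re, Complex.mul_re, Complex.mul_im, Complex.add_im]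
  ring

private lemma eR10 (ψ : Fin 2 × Fin 2 → ℂ) :
    (Matrix.trace (Matrix.vecMulVec ψ (star ψ) * (pauli 1 ⊗ₖ pauli 0))).re
    = (-2)*(ψ (0,1)).im*(ψ (1,0)).re + 2*(ψ (0,1)).re*(ψ (1,0)).im + (-2)*(ψ (0,0)).im*(ψ (1,1)).re + 2*(ψ (0,0)).re*(ψ (1,1)).im := by
  simp [Matrix.trace, Matrix.mul_apply, Fintype.sum_prod_type, Fin.sum_univ_two, Matrix.vecMulVec_apply, pauli, Matrix.kroneckerMap_apply, Matrix.diag, Matrix.cons_val', Matrix.cons_val_zero, Matrix.cons_val_one, Matrix.head_cons, Matrix.empty_val', Matrix.cons_val_fin_one, Matrix.head_fin_const, Complex.add_re, Complex.mul_re, Complex.mul_im, Complex.add_im]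
  ring

private lemma eR11 (ψ : Fin 2 × Fin 2 → ℂ) :
    (Matrix.trace (Matrix.vecMulVec ψ (star ψ) * (pauli 1 ⊗ₖ pauli 1))).re
    = 2*(ψ (0,1)).im*(ψ (1,0)).im + 2*(ψ (0,1)).re*(ψ (1,0)).re + (-2)*(ψ (0,0)).im*(ψ (1,1)).im + (-2)*(ψ (0,0)).re*(ψ (1,1)).re := by
  simp [Matrix.trace, Matrix.mul_apply, Fintype.sum_prod_type, Fin.sum_univ_two, Matrix.vecMulVec_apply, pauli, Matrix.kroneckerMap_apply, Matrix.diag, Matrix.cons_val', Matrix.cons_val_zero, Matrix.cons_val_one, Matrix.head_cons, Matrix.empty_val', Matrix.cons_val_fin_one, Matrix.head_fin_const, Complex.add_re, Complex.mul_re, Complex.mul_im, Complex.add_im]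
  ring

private lemma eR12 (ψ : Fin 2 × Fin 2 → ℂ) :
    (Matrix.trace (Matrix.vecMulVec ψ (star ψ) * (pauli 1 ⊗ₖ pauli 2))).re
    = 2*(ψ (0,1)).im*(ψ (1,1)).re + (-2)*(ψ (0,1)).re*(ψ (1,1)).im + (-2)*(ψ (0,0)).im*(ψ (1,0)).re + 2*(ψ (0,0)).re*(ψ (1,0)).im := by
  simp [Matrix.trace, Matrix.mul_apply, Fintype.sum_prod_type, Fin.sum_univ_two, Matrix.vecMulVec_apply, pauli, Matrix.kroneckerMap_apply, Matrix.diag, Matrix.cons_val', Matrix.cons_val_zero, Matrix.cons_val_one, Matrix.head_cons, Matrix.empty_val', Matrix.cons_val_fin_one, Matrix.head_fin_const, Complex.add_re, Complex.mul_re, Complex.mul_im, Complex.add_im]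
  ring

private lemma eR20 (ψ : Fin 2 × Fin 2 → ℂ) :
    (Matrix.trace (Matrix.vecMulVec ψ (star ψ) * (pauli 2 ⊗ₖ pauli 0))).re
    = (-2)*(ψ (1,0)).im*(ψ (1,1)).im + (-2)*(ψ (1,0)).re*(ψ (1,1)).re + 2*(ψ (0,0)).im*(ψ (0,1)).im + 2*(ψ (0,0)).re*(ψ (0,1)).re := by
  simp [Matrix.trace, Matrix.mul_apply, Fintype.sum_prod_type, Fin.sum_univ_two, Matrix.vecMulVec_apply, pauli, Matrix.kroneckerMap_apply, Matrix.diag, Matrix.cons_val', Matrix.cons_val_zero, Matrix.cons_val_one, Matrix.head_cons, Matrix.empty_val', Matrix.cons_val_fin_one, Matrix.head_fin_const, Complex.add_re, Complex.mul_re, Complex.mul_im, Complex.add_im]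
  ring

private lemma eR21 (ψ : Fin 2 × Fin 2 → ℂ) :
    (Matrix.trace (Matrix.vecMulVec ψ (star ψ) * (pauli 2 ⊗ₖ pauli 1))).re
    = 2*(ψ (1,0)).im*(ψ (1,1)).re + (-2)*(ψ (1,0)).re*(ψ (1,1)).im + (-2)*(ψ (0,0)).im*(ψ (0,1)).re + 2*(ψ (0,0)).re*(ψ (0,1)).im := by
  simp [Matrix.trace, Matrix.mul_apply, Fintype.sum_prod_type, Fin.sum_univ_two, Matrix.vecMulVec_apply, pauli, Matrix.kroneckerMap_apply, Matrix.diag, Matrix.cons_val', Matrix.cons_val_zero, Matrix.cons_val_one, Matrix.head_cons, Matrix.empty_val', Matrix.cons_val_fin_one, Matrix.head_fin_const, Complex.add_re, Complex.mul_re, Complex.mul_im, Complex.add_im]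
  ring

private lemma eR22 (ψ : Fin 2 × Fin 2 → ℂ) :
    (Matrix.trace (Matrix.vecMulVec ψ (star ψ) * (pauli 2 ⊗ₖ pauli 2))).re
    = (ψ (1,1)).im^2 + (ψ (1,1)).re^2 + (-1)*(ψ (1,0)).im^2 + (-1)*(ψ (1,0)).re^2 + (-1)*(ψ (0,1)).im^2 + (-1)*(ψ (0,1)).re^2 + (ψ (0,0)).im^2 + (ψ (0,0)).re^2 := by
  simp [Matrix.trace, Matrix.mul_apply, Fintype.sum_prod_type, Fin.sum_univ_two, Matrix.vecMulVec_apply, pauli, Matrix.kroneckerMap_apply, Matrix.diag, Matrix.cons_val', Matrix.cons_val_zero, Matrix.cons_val_one, Matrix.head_cons, Matrix.empty_val', Matrix.cons_val_fin_one, Matrix.head_fin_const, Complex.add_re, Complex.mul_re, Complex.mul_im, Complex.add_im]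
  ring

private lemma eC2 (ψ : Fin 2 × Fin 2 → ℂ) :
    (‖dotProduct ψ ((pauli 1 ⊗ₖ pauli 1) *ᵥ ψ)‖)^2
    = 4*(ψ (0,1)).im^2*(ψ (1,0)).im^2 + 4*(ψ (0,1)).im^2*(ψ (1,0)).re^2 + 4*(ψ (0,1)).re^2*(ψ (1,0)).im^2 + 4*(ψ (0,1)).re^2*(ψ (1,0)).re^2 + (-8)*(ψ (0,0)).im*(ψ (0,1)).im*(ψ (1,0)).im*(ψ (1,1)).im + (-8)*(ψ (0,0)).im*(ψ (0,1)).im*(ψ (1,0)).re*(ψ (1,1)).re + (-8)*(ψ (0,0)).im*(ψ (0,1)).re*(ψ (1,0)).im*(ψ (1,1)).re + 8*(ψ (0,0)).im*(ψ (0,1)).re*(ψ (1,0)).re*(ψ (1,1)).im + 4*(ψ (0,0)).im^2*(ψ (1,1)).im^2 + 4*(ψ (0,0)).im^2*(ψ (1,1)).re^2 + 8*(ψ (0,0)).re*(ψ (0,1)).im*(ψ (1,0)).im*(ψ (1,1)).re + (-8)*(ψ (0,0)).re*(ψ (0,1)).im*(ψ (1,0)).re*(ψ (1,1)).im + (-8)*(ψ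 (0,0)).re*(ψ (0,1)).re*(ψ (1,0)).im*(ψ (1,1)).im + (-8)*(ψ (0,0)).re*(ψ (0,1)).re*(ψ (1,0)).re*(ψ (1,1)).re + 4*(ψ (0,0)).re^2*(ψ (1,1)).im^2 + 4*(ψ (0,0)).re^2*(ψ (1,1)).re^2 := by
  rw [Complex.sq_norm, Complex.normSq_apply]
  simp [dotProduct, Matrix.mulVec, Fintype.sum_prod_type, Fin.sum_univ_two, pauli,
    Matrix.kroneckerMap_apply, Matrix.cons_val', Matrix.cons_val_zero, Matrix.cons_val_one,
    Matrix.head_cons, Matrix.empty_val', Matrix.cons_val_fin_one, Matrix.head_fin_const,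
    Complex.add_re, Complex.mul_re, Complex.mul_im, Complex.add_im]
  ring

private lemma eNorm (ψ : Fin 2 × Fin 2 → ℂ) (hψ : dotProduct (star ψ) ψ = 1) :
    (ψ (1,1)).im^2 + (ψ (1,1)).re^2 + (ψ (1,0)).im^2 + (ψ (1,0)).re^2 + (ψ (0,1)).im^2 + (ψ (0,1)).re^2 + (ψ (0,0)).im^2 + (ψ (0,0)).re^2 = 1 := by
  have h := congrArg Complex.re hψ
  simp [dotProduct, Fintype.sum_prod_type, Fin.sum_univ_two, Complex.add_re,
    Complex.mul_re, -Prod.mk_zero_zero, -Prod.mk_one_one] at h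
  linarith [h]


private lemma traceBell (ρ : Matrix (Fin 2 × Fin 2) (Fin 2 × Fin 2) ℂ) (a b c d : Fin 3 → ℝ) :
    (Matrix.trace (ρ * bellOp a b c d)).re
    = (1/2) * ∑ i, ∑ j, (a i * (c j + d j) + b i * (c j - d j)) *
        (Matrix.trace (ρ * (pauli i ⊗ₖ pauli j))).re := by
  have h : Matrix.trace (ρ * bellOp a b c d)
      = (1 / 2 : ℂ) * ∑ i, ∑ j,
        ((a i * (c j + d j) + b i * (c j - d j) : ℝ) : ℂ) *
          Matrix.trace (ρ * (pauli i ⊗ₖ pauli j)) := by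
    simp only [bellOp, Matrix.mul_smul, Matrix.mul_sum, Matrix.trace_smul, Matrix.trace_sum,
      smul_eq_mul]
  rw [h]
  rw [show (1/2:ℂ) = ((1/2:ℝ):ℂ) by norm_num]
  rw [Complex.re_ofReal_mul]
  congr 1
  rw [Complex.re_sum]
  refine Finset.sum_congr rfl fun i _ => ?_
  rw [Complex.re_sum]
  refine Finset.sum_congr rfl fun j _ => ?_
  rw [Complex.re_ofReal_mul]

set_option maxHeartbeats 3000000 in
/-- for a pure two-qubit state |ψ⟩ with concurrence
C = |⟨ψ*|σ_y⊗σ_y|ψ⟩|, the maximal CHSH expectation is √(1 + C²). -/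
theorem pure_state_chsh (ψ : Fin 2 × Fin 2 → ℂ)
    (hψ : dotProduct (star ψ) ψ = 1) (Cc : ℝ)
    (hC : Cc = ‖dotProduct ψ ((pauli 1 ⊗ₖ pauli 1) *ᵥ ψ)‖) :
    IsGreatest (betaSet (Matrix.vecMulVec ψ (star ψ))) (Real.sqrt (1 + Cc ^ 2)) := by
  have hCpos : 0 ≤ Cc := by rw [hC]; exact norm_nonneg _
  have hC2 : Cc^2 = 4*(ψ (0,1)).im^2*(ψ (1,0)).im^2 + 4*(ψ (0,1)).im^2*(ψ (1,0)).re^2 + 4*(ψ (0,1)).re^2*(ψ (1,0)).im^2 + 4*(ψ (0,1)).re^2*(ψ (1,0)).re^2 + (-8)*(ψ (0,0)).im*(ψ (0,1)).im*(ψ (1,0)).im*(ψ (1,1)).im + (-8)*(ψ (0,0)).im*(ψ (0,1)).im*(ψ (1,0)).re*(ψ (1,1)).re + (-8)*(ψ (0,0)).im*(ψ (0,1)).re*(ψ (1,0)).im*(ψ (1,1)).re + 8*(ψ (0,0)).im*(ψ (0,1)).re*(ψ (1,0)).re*(ψ (1,1)).im + 4*(ψ (0,0)).im^2*(ψ (1,1)).im^2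 + 4*(ψ (0,0)).im^2*(ψ (1,1)).re^2 + 8*(ψ (0,0)).re*(ψ (0,1)).im*(ψ (1,0)).im*(ψ (1,1)).re + (-8)*(ψ (0,0)).re*(ψ (0,1)).im*(ψ (1,0)).re*(ψ (1,1)).im + (-8)*(ψ (0,0)).re*(ψ (0,1)).re*(ψ (1,0)).im*(ψ (1,1)).im + (-8)*(ψ (0,0)).re*(ψ (0,1)).re*(ψ (1,0)).re*(ψ (1,1)).re + 4*(ψ (0,0)).re^2*(ψ (1,1)).im^2 + 4*(ψ (0,0)).re^2*(ψ (1,1)).re^2 := by rw [hC]; exact eC2 ψ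
  have hn := eNorm ψ hψ
  have h00 : (Matrix.trace (Matrix.vecMulVec ψ (star ψ) * (pauli 0 ⊗ₖ pauli 0))).re^2 + (Matrix.trace (Matrix.vecMulVec ψ (star ψ) * (pauli 1 ⊗ₖ pauli 0))).re^2 + (Matrix.trace (Matrix.vecMulVec ψ (star ψ) * (pauli 2 ⊗ₖ pauli 0))).re^2 = Cc^2 + (2*(ψ (1,0)).im*(ψ (1,1)).im + 2*(ψ (1,0)).re*(ψ (1,1)).re + 2*(ψ (0,0)).im*(ψ (0,1)).im + 2*(ψ (0,0)).re*(ψ (0,1)).re)^2 := by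
    rw [eR00 ψ, eR10 ψ, eR20 ψ, hC2]; ring
  have h11 : (Matrix.trace (Matrix.vecMulVec ψ (star ψ) * (pauli 0 ⊗ₖ pauli 1))).re^2 + (Matrix.trace (Matrix.vecMulVec ψ (star ψ) * (pauli 1 ⊗ₖ pauli 1))).re^2 + (Matrix.trace (Matrix.vecMulVec ψ (star ψ) * (pauli 2 ⊗ₖ pauli 1))).re^2 = Cc^2 + ((-2)*(ψ (1,0)).im*(ψ (1,1)).re + 2*(ψ (1,0)).re*(ψ (1,1)).im + (-2)*(ψ (0,0)).im*(ψ (0,1)).re + 2*(ψ (0,0)).re*(ψ (0,1)).im)^2 := by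
    rw [eR01 ψ, eR11 ψ, eR21 ψ, hC2]; ring
  have h22 : (Matrix.trace (Matrix.vecMulVec ψ (star ψ) * (pauli 0 ⊗ₖ pauli 2))).re^2 + (Matrix.trace (Matrix.vecMulVec ψ (star ψ) * (pauli 1 ⊗ₖ pauli 2))).re^2 + (Matrix.trace (Matrix.vecMulVec ψ (star ψ) * (pauli 2 ⊗ₖ pauli 2))).re^2 = Cc^2 + ((-1)*(ψ (1,1)).im^2 + (-1)*(ψ (1,1)).re^2 + (ψ (1,0)).im^2 + (ψ (1,0)).re^2 + (-1)*(ψ (0,1)).im^2 + (-1)*(ψ (0,1)).re^2 + (ψ (0,0)).im^2 + (ψ (0,0)).re^2)^2 := by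
    rw [eR02 ψ, eR12 ψ, eR22 ψ, hC2]; ring
  have h01 : (Matrix.trace (Matrix.vecMulVec ψ (star ψ) * (pauli 0 ⊗ₖ pauli 0))).re*(Matrix.trace (Matrix.vecMulVec ψ (star ψ) * (pauli 0 ⊗ₖ pauli 1))).re + (Matrix.trace (Matrix.vecMulVec ψ (star ψ) * (pauli 1 ⊗ₖ pauli 0))).re*(Matrix.trace (Matrix.vecMulVec ψ (star ψ) * (pauli 1 ⊗ₖ pauli 1))).re + (Matrix.trace (Matrix.vecMulVec ψ (star ψ) * (pauli 2 ⊗ₖ pauli 0))).re*(Matrix.trace (Matrix.vecMulVec ψ (star ψ) * (pauli 2 ⊗ₖ pauli 1))).re = (2*(ψ (1,0)).im*(ψ (1,1)).im + 2*(ψ (1,0)).re*(ψ (1,1)).re + 2*(ψ (0,0)).im*(ψ (0,1)).im + 2*(ψ (0,0)).re*(ψ (0,1)).re)*((-2)*(ψ (1,0)).im*(ψ (1,1)).re + 2*(ψ (1,0)).re*(ψ (1,1)).im + (-2)*(ψ (0,0)).im*(ψ (0,1)).re + 2*(ψ (0,0)).re*(ψ (0,1)).im) := by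
    rw [eR00 ψ, eR01 ψ, eR10 ψ, eR11 ψ, eR20 ψ, eR21 ψ]; ring
  have h02 : (Matrix.trace (Matrix.vecMulVec ψ (star ψ) * (pauli 0 ⊗ₖ pauli 0))).re*(Matrix.trace (Matrix.vecMulVec ψ (star ψ) * (pauli 0 ⊗ₖ pauli 2))).re + (Matrix.trace (Matrix.vecMulVec ψ (star ψ) * (pauli 1 ⊗ₖ pauli 0))).re*(Matrix.trace (Matrix.vecMulVec ψ (star ψ) * (pauli 1 ⊗ₖ pauli 2))).re + (Matrix.trace (Matrix.vecMulVec ψ (star ψ) * (pauli 2 ⊗ₖ pauli 0))).re*(Matrix.trace (Matrix.vecMulVec ψ (star ψ) * (pauli 2 ⊗ₖ pauli 2))).re = (2*(ψ (1,0)).im*(ψ (1,1)).im + 2*(ψ (1,0)).re*(ψ (1,1)).re + 2*(ψ (0,0)).im*(ψ (0,1)).im + 2*(ψ (0,0)).re*(ψ (0,1)).re)*((-1)*(ψ (1,1)).im^2 + (-1)*(ψ (1,1)).re^2 + (ψ (1,0)).im^2 + (ψ (1,0)).re^2 + (-1)*(ψ (0,1)).im^2 + (-1)*(ψ (0,1)).re^2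 + (ψ (0,0)).im^2 + (ψ (0,0)).re^2) := by
    rw [eR00 ψ, eR02 ψ, eR10 ψ, eR12 ψ, eR20 ψ, eR22 ψ]; ring
  have h12 : (Matrix.trace (Matrix.vecMulVec ψ (star ψ) * (pauli 0 ⊗ₖ pauli 1))).re*(Matrix.trace (Matrix.vecMulVec ψ (star ψ) * (pauli 0 ⊗ₖ pauli 2))).re + (Matrix.trace (Matrix.vecMulVec ψ (star ψ) * (pauli 1 ⊗ₖ pauli 1))).re*(Matrix.trace (Matrix.vecMulVec ψ (star ψ) * (pauli 1 ⊗ₖ pauli 2))).re + (Matrix.trace (Matrix.vecMulVec ψ (star ψ) * (pauli 2 ⊗ₖ pauli 1))).re*(Matrix.trace (Matrix.vecMulVec ψ (star ψ) * (pauli 2 ⊗ₖ pauli 2))).re = ((-2)*(ψ (1,0)).im*(ψ (1,1)).re + 2*(ψ (1,0)).re*(ψ (1,1)).im + (-2)*(ψ (0,0)).im*(ψ (0,1)).re + 2*(ψ (0,0)).re*(ψ (0,1)).im)*((-1)*(ψ (1,1)).im^2 + (-1)*(ψ (1,1)).re^2 + (ψ (1,0)).im^2 + (ψ (1,0)).re^2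 + (-1)*(ψ (0,1)).im^2 + (-1)*(ψ (0,1)).re^2 + (ψ (0,0)).im^2 + (ψ (0,0)).re^2) := by
    rw [eR01 ψ, eR02 ψ, eR11 ψ, eR12 ψ, eR21 ψ, eR22 ψ]; ring
  have hrt : (2*(ψ (1,0)).im*(ψ (1,1)).im + 2*(ψ (1,0)).re*(ψ (1,1)).re + 2*(ψ (0,0)).im*(ψ (0,1)).im + 2*(ψ (0,0)).re*(ψ (0,1)).re)^2 + ((-2)*(ψ (1,0)).im*(ψ (1,1)).re + 2*(ψ (1,0)).re*(ψ (1,1)).im + (-2)*(ψ (0,0)).im*(ψ (0,1)).re + 2*(ψ (0,0)).re*(ψ (0,1)).im)^2 + ((-1)*(ψ (1,1)).im^2 + (-1)*(ψ (1,1)).re^2 + (ψ (1,0)).im^2 + (ψ (1,0)).re^2 + (-1)*(ψ (0,1)).im^2 + (-1)*(ψ (0,1)).re^2 + (ψ (0,0)).im^2 + (ψ (0,0)).re^2)^2 = 1 - Cc^2 := by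
    rw [hC2]
    linear_combination ((ψ (1,1)).im^2 + (ψ (1,1)).re^2 + (ψ (1,0)).im^2 + (ψ (1,0)).re^2 + (ψ (0,1)).im^2 + (ψ (0,1)).re^2 + (ψ (0,0)).im^2 + (ψ (0,0)).re^2 + 1) * hn
  constructor
  · obtain ⟨a0,a1,a2,b0,b1,b2,c0,c1,c2,d0,d1,d2, ha,hb,hcc,hd, hval⟩ :=
      lower_aux Cc hCpos ((Matrix.trace (Matrix.vecMulVec ψ (star ψ) * (pauli 0 ⊗ₖ pauli 0))).re) ((Matrix.trace (Matrix.vecMulVec ψ (star ψ) * (pauli 0 ⊗ₖ pauli 1))).re) ((Matrix.trace (Matrix.vecMulVec ψ (star ψ) * (pauli 0 ⊗ₖ pauli 2))).re) ((Matrix.trace (Matrix.vecMulVec ψ (star ψ) * (pauli 1 ⊗ₖ pauli 0))).re) ((Matrix.trace (Matrix.vecMulVec ψ (star ψ) * (pauli 1 ⊗ₖ pauli 1))).re) ((Matrix.trace (Matrix.vecMulVec ψ (star ψ) * (pauli 1 ⊗ₖ pauli 2))).re) ((Matrix.trace (Matrix.vecMulVec ψ (star ψ) * (pauli 2 ⊗ₖ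 pauli 0))).re) ((Matrix.trace (Matrix.vecMulVec ψ (star ψ) * (pauli 2 ⊗ₖ pauli 1))).re) ((Matrix.trace (Matrix.vecMulVec ψ (star ψ) * (pauli 2 ⊗ₖ pauli 2))).re) (2*(ψ (1,0)).im*(ψ (1,1)).im + 2*(ψ (1,0)).re*(ψ (1,1)).re + 2*(ψ (0,0)).im*(ψ (0,1)).im + 2*(ψ (0,0)).re*(ψ (0,1)).re) ((-2)*(ψ (1,0)).im*(ψ (1,1)).re + 2*(ψ (1,0)).re*(ψ (1,1)).im + (-2)*(ψ (0,0)).im*(ψ (0,1)).re + 2*(ψ (0,0)).re*(ψ (0,1)).im) ((-1)*(ψ (1,1)).im^2 + (-1)*(ψ (1,1)).re^2 + (ψ (1,0)).im^2 + (ψ (1,0)).re^2 + (-1)*(ψ (0,1)).im^2 + (-1)*(ψ (0,1)).re^2 + (ψ (0,0)).im^2 + (ψ (0,0)).re^2) h00 h11 h22 h01 h02 h12 hrt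
    refine ⟨![a0,a1,a2], ![b0,b1,b2], ![c0,c1,c2], ![d0,d1,d2], ?_, ?_, ?_, ?_, ?_⟩
    · simp [unitVec, Fin.sum_univ_three]; linarith [ha]
    · simp [unitVec, Fin.sum_univ_three]; linarith [hb]
    · simp [unitVec, Fin.sum_univ_three]; linarith [hcc]
    · simp [unitVec, Fin.sum_univ_three]; linarith [hd]
    · rw [traceBell]
      simp only [Fin.sum_univ_three, Matrix.cons_val_zero, Matrix.cons_val_one,
        Matrix.head_cons, Matrix.cons_val_two, Matrix.tail_cons]
      linarith [hval]
  · rintro t ⟨a,b,c,d,ha,hb,hcc,hd,rfl⟩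
    have ha' : (a 0)^2 + (a 1)^2 + (a 2)^2 = 1 := by
      have := ha; simp only [unitVec, Fin.sum_univ_three] at this; linarith [this]
    have hb' : (b 0)^2 + (b 1)^2 + (b 2)^2 = 1 := by
      have := hb; simp only [unitVec, Fin.sum_univ_three] at this; linarith [this]
    have hc' : (c 0)^2 + (c 1)^2 + (c 2)^2 = 1 := by
      have := hcc; simp only [unitVec, Fin.sum_univ_three] at this; linarith [this]
    have hd' : (d 0)^2 + (d 1)^2 + (d 2)^2 = 1 := by
      have := hd; simp only [unitVec, Fin.sum_univ_three] at this; linarith [this]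
    have hup := upper_aux Cc hCpos ((Matrix.trace (Matrix.vecMulVec ψ (star ψ) * (pauli 0 ⊗ₖ pauli 0))).re) ((Matrix.trace (Matrix.vecMulVec ψ (star ψ) * (pauli 0 ⊗ₖ pauli 1))).re) ((Matrix.trace (Matrix.vecMulVec ψ (star ψ) * (pauli 0 ⊗ₖ pauli 2))).re) ((Matrix.trace (Matrix.vecMulVec ψ (star ψ) * (pauli 1 ⊗ₖ pauli 0))).re) ((Matrix.trace (Matrix.vecMulVec ψ (star ψ) * (pauli 1 ⊗ₖ pauli 1))).re) ((Matrix.trace (Matrix.vecMulVec ψ (star ψ) * (pauli 1 ⊗ₖ pauli 2))).re) ((Matrix.trace (Matrix.vecMulVec ψ (star ψ) * (pauli 2 ⊗ₖ pauli 0))).re) ((Matrix.trace (Matrix.vecMulVec ψ (star ψ) * (pauli 2 ⊗ₖ pauli 1))).re) ((Matrix.trace (Matrix.vecMulVec ψ (star ψ) * (pauli 2 ⊗ₖ pauli 2))).re) (2*(ψ (1,0)).im*(ψ (1,1)).im + 2*(ψ (1,0)).re*(ψ (1,1)).re + 2*(ψ (0,0)).im*(ψ (0,1)).im + 2*(ψ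 (0,0)).re*(ψ (0,1)).re) ((-2)*(ψ (1,0)).im*(ψ (1,1)).re + 2*(ψ (1,0)).re*(ψ (1,1)).im + (-2)*(ψ (0,0)).im*(ψ (0,1)).re + 2*(ψ (0,0)).re*(ψ (0,1)).im) ((-1)*(ψ (1,1)).im^2 + (-1)*(ψ (1,1)).re^2 + (ψ (1,0)).im^2 + (ψ (1,0)).re^2 + (-1)*(ψ (0,1)).im^2 + (-1)*(ψ (0,1)).re^2 + (ψ (0,0)).im^2 + (ψ (0,0)).re^2) h00 h11 h22 h01 h02 h12 hrt
      (a 0) (a 1) (a 2) (b 0) (b 1) (b 2) (c 0) (c 1) (c 2) (d 0) (d 1) (d 2) ha' hb' hc' hd'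
    rw [traceBell]
    simp only [Fin.sum_univ_three]
    linarith [hup]
end
end

section
/- Let ρ = (1/2)·[[0,0,0,0],[0,1−a,C,0],[0,C,1+a,0],[0,0,0,0]] in the computational basis, with 0 ≤ C ≤ 1 and |a| ≤ √(1−C²). Then ρ is a valid density matrix (positive semidefinite, trace 1), its concurrence equals C, and its maximal CHSH expectation equals √(1 + C²). -/
open Matrix Kronecker BigOperators ComplexOrder

noncomputable section

/-! ### Auxiliary material -/

set_option maxHeartbeats 2000000

/-- Auxiliary values of the correlation function. -/
def Rfun (Cc : ℝ) : Fin 3 → Fin 3 → ℝ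
  | 0, 0 => Cc | 1, 1 => Cc | 2, 2 => -1 | _, _ => 0

/-- Explicit equivalence between `Fin 2 × Fin 2` and `Fin 4`. -/
def e4 : (Fin 2 × Fin 2) ≃ Fin 4 where
  toFun p := if p = (0,0) then 0 else if p = (0,1) then 1 else if p = (1,0) then 2 else 3
  invFun i := if i = 0 then (0,0) else if i = 1 then (0,1) else if i = 2 then (1,0) else (1,1)
  left_inv := by decide
  right_inv := by decide

open Polynomial in
theorem charpoly_aux (m r s l0 l1 : ℂ) (M : Matrix (Fin 2 × Fin 2) (Fin 2 × Fin 2) ℂ)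
    (hM : M = Matrix.of fun p q =>
      if p = ((0 : Fin 2), (1 : Fin 2)) ∧ q = ((0 : Fin 2), (1 : Fin 2)) then m
      else if p = (0, 1) ∧ q = (1, 0) then r
      else if p = (1, 0) ∧ q = (0, 1) then s
      else if p = (1, 0) ∧ q = (1, 0) then m
      else 0)
    (hsum : l0 + l1 = m + m) (hprod : l0 * l1 = m * m - r * s) :
    M.charpoly = (X - C l0) * (X - C l1) * (X - C 0) * (X - C 0) := by
  have hre : (Matrix.reindex e4 e4 M) = !![0,0,0,0; 0,m,r,0; 0,s,m,0; 0,0,0,0] := by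
    subst hM
    ext i j
    fin_cases i <;> fin_cases j <;> simp (config := { decide := true }) [e4, Matrix.reindex_apply, Matrix.submatrix_apply, Prod.ext_iff, Matrix.vecHead, Matrix.vecTail]
  have h1 : M.charpoly = (Matrix.reindex e4 e4 M).charpoly := (Matrix.charpoly_reindex e4 M).symm
  rw [h1, hre, Matrix.charpoly]
  have hcm : charmatrix (!![0,0,0,0; 0,m,r,0; 0,s,m,0; 0,0,0,0] : Matrix (Fin 4) (Fin 4) ℂ)
      = !![X, 0, 0, 0; 0, X - C m, -C r, 0; 0, -C s, X - C m, 0; 0, 0, 0, X] := by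
    refine Matrix.ext fun i j => ?_
    fin_cases i <;> fin_cases j <;>
      simp (config := { decide := true }) [charmatrix, Matrix.scalar_apply, Matrix.diagonal,
        RingHom.mapMatrix_apply, Matrix.map_apply, Matrix.vecHead, Matrix.vecTail]
  rw [hcm]
  have e1 : C l0 + C l1 = C m + C m := by
    simpa only [C_add] using congrArg (C : ℂ →+* ℂ[X]) hsum
  have e2 : C l0 * C l1 = C m * C m - C r * C s := by
    simpa only [C_mul, C_sub] using congrArg (C : ℂ →+* ℂ[X]) hprod
  simp only [map_zero, sub_zero]
  rw [Matrix.det_succ_row_zero]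
  simp [Fin.sum_univ_succ, Matrix.det_succ_row_zero, Matrix.submatrix_apply, Fin.succAbove]
  linear_combination (X^3 : Polynomial ℂ) * e1 - (X^2 : Polynomial ℂ) * e2

theorem chsh_bound_aux (Cc : ℝ) (h0 : 0 ≤ Cc) (h1 : Cc ≤ 1)
    (A0 A1 A2 B0 B1 B2 p0 p1 p2 q0 q1 q2 : ℝ)
    (hA : A0^2 + A1^2 + A2^2 = 1) (hB : B0^2 + B1^2 + B2^2 = 1)
    (hPQ : p0^2+p1^2+p2^2 + (q0^2+q1^2+q2^2) = 4)
    (horth : p0*q0 + p1*q1 + p2*q2 = 0) :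
    ((Cc * (A0 * p0) + Cc * (A1 * p1) - A2 * p2)
        + (Cc * (B0 * q0) + Cc * (B1 * q1) - B2 * q2)) / 2 ≤ Real.sqrt (1 + Cc ^ 2) := by
  have hC2 : (0:ℝ) ≤ 1 - Cc^2 := by nlinarith
  set Xv := Cc^2 * (p0^2 + p1^2) + p2^2 with hXv
  set Yv := Cc^2 * (q0^2 + q1^2) + q2^2 with hYv
  have hX0 : 0 ≤ Xv := by positivity
  have hY0 : 0 ≤ Yv := by positivity
  have cs1 : Cc * (A0 * p0) + Cc * (A1 * p1) - A2 * p2 ≤ Real.sqrt Xv := by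
    have h2 : (Cc * (A0 * p0) + Cc * (A1 * p1) - A2 * p2)^2 ≤ Xv := by
      have idy : (A0^2 + A1^2 + A2^2) * Xv - (Cc * (A0 * p0) + Cc * (A1 * p1) - A2 * p2)^2
          = (A0*(Cc*p1) - A1*(Cc*p0))^2 + (A0*p2 + A2*(Cc*p0))^2 + (A1*p2 + A2*(Cc*p1))^2 := by
        rw [hXv]; ring
      rw [hA] at idy
      linarith [sq_nonneg (A0*(Cc*p1) - A1*(Cc*p0)), sq_nonneg (A0*p2 + A2*(Cc*p0)),
        sq_nonneg (A1*p2 + A2*(Cc*p1))]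
    calc Cc * (A0 * p0) + Cc * (A1 * p1) - A2 * p2
        ≤ |Cc * (A0 * p0) + Cc * (A1 * p1) - A2 * p2| := le_abs_self _
      _ = Real.sqrt ((Cc * (A0 * p0) + Cc * (A1 * p1) - A2 * p2)^2) := (Real.sqrt_sq_eq_abs _).symm
      _ ≤ Real.sqrt Xv := Real.sqrt_le_sqrt h2
  have cs2 : Cc * (B0 * q0) + Cc * (B1 * q1) - B2 * q2 ≤ Real.sqrt Yv := by
    have h2 : (Cc * (B0 * q0) + Cc * (B1 * q1) - B2 * q2)^2 ≤ Yv := by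
      have idy : (B0^2 + B1^2 + B2^2) * Yv - (Cc * (B0 * q0) + Cc * (B1 * q1) - B2 * q2)^2
          = (B0*(Cc*q1) - B1*(Cc*q0))^2 + (B0*q2 + B2*(Cc*q0))^2 + (B1*q2 + B2*(Cc*q1))^2 := by
        rw [hYv]; ring
      rw [hB] at idy
      linarith [sq_nonneg (B0*(Cc*q1) - B1*(Cc*q0)), sq_nonneg (B0*q2 + B2*(Cc*q0)),
        sq_nonneg (B1*q2 + B2*(Cc*q1))]
    calc Cc * (B0 * q0) + Cc * (B1 * q1) - B2 * q2
        ≤ |Cc * (B0 * q0) + Cc * (B1 * q1) - B2 * q2| := le_abs_self _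
      _ = Real.sqrt ((Cc * (B0 * q0) + Cc * (B1 * q1) - B2 * q2)^2) := (Real.sqrt_sq_eq_abs _).symm
      _ ≤ Real.sqrt Yv := Real.sqrt_le_sqrt h2
  have key : Real.sqrt Xv + Real.sqrt Yv ≤ 2 * Real.sqrt (1 + Cc^2) := by
    have hS0 : 0 ≤ Real.sqrt Xv := Real.sqrt_nonneg _
    have hT0 : 0 ≤ Real.sqrt Yv := Real.sqrt_nonneg _
    have hS2 : Real.sqrt Xv ^2 = Xv := Real.sq_sqrt hX0
    have hT2 : Real.sqrt Yv ^2 = Yv := Real.sq_sqrt hY0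
    set S := Real.sqrt Xv
    set T := Real.sqrt Yv
    have hsq : (S + T)^2 ≤ 4 * (1 + Cc^2) := by
      set P := p0^2+p1^2+p2^2 with hP
      set Q := q0^2+q1^2+q2^2 with hQ
      have hP0 : 0 ≤ P := by positivity
      have hQ0 : 0 ≤ Q := by positivity
      have hortho : p2^2 * Q + q2^2 * P ≤ P * Q := by
        have h2 : p0*q0 + p1*q1 = -(p2*q2) := by linarith
        have h3 : (p0*q0 + p1*q1)^2 = (p2*q2)^2 := by rw [h2]; ring
        have idy : P * Q - p2^2 * Q - q2^2 * P
            = (p0*q1 - p1*q0)^2 + ((p0*q0 + p1*q1)^2 - (p2*q2)^2) := by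
          rw [hP, hQ]; ring
        rw [h3] at idy
        linarith [sq_nonneg (p0*q1 - p1*q0)]
      have hXP : Xv ≤ P := by
        have idy : P - Xv = (1 - Cc^2) * (p0^2 + p1^2) := by rw [hXv, hP]; ring
        linarith [mul_nonneg hC2 (by positivity : (0:ℝ) ≤ p0^2+p1^2)]
      have hYQ : Yv ≤ Q := by
        have idy : Q - Yv = (1 - Cc^2) * (q0^2 + q1^2) := by rw [hYv, hQ]; ring
        linarith [mul_nonneg hC2 (by positivity : (0:ℝ) ≤ q0^2+q1^2)]
      have hXQYP : Xv * Q + Yv * P ≤ (1 + Cc^2) * (P * Q) := by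
        have e1 : Xv * Q + Yv * P = 2*Cc^2*(P*Q) + (1 - Cc^2) * (p2^2 * Q + q2^2 * P) := by
          rw [hXv, hYv, hP, hQ]; ring
        have e2 := mul_le_mul_of_nonneg_left hortho hC2
        linarith
      have hPQ4 : P + Q = 4 := by rw [hP, hQ]; linarith
      rcases eq_or_lt_of_le hP0 with hP0' | hP0'
      · have hXv0 : Xv = 0 := le_antisymm (hP0' ▸ hXP) hX0
        have hSz : S = 0 := by rw [show S = Real.sqrt Xv from rfl, hXv0, Real.sqrt_zero]
        rw [hSz, zero_add]
        linarith [hT2, hYQ, hPQ4, sq_nonneg Cc]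
      rcases eq_or_lt_of_le hQ0 with hQ0' | hQ0'
      · have hYv0 : Yv = 0 := le_antisymm (hQ0' ▸ hYQ) hY0
        have hTz : T = 0 := by rw [show T = Real.sqrt Yv from rfl, hYv0, Real.sqrt_zero]
        rw [hTz, add_zero]
        linarith [hS2, hXP, hPQ4, sq_nonneg Cc]
      have hpos := mul_pos hP0' hQ0'
      have cs : (S + T)^2 * (P * Q) ≤ (Xv * Q + Yv * P) * (P + Q) := by
        have idy : (Xv * Q + Yv * P) * (P + Q) - (S + T)^2 * (P * Q) = (S*Q - T*P)^2 := by
          rw [← hS2, ← hT2]; ring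
        linarith [sq_nonneg (S*Q - T*P)]
      have h4 : (S + T)^2 * (P * Q) ≤ (4 * (1 + Cc^2)) * (P * Q) := by
        calc (S + T)^2 * (P * Q) ≤ (Xv * Q + Yv * P) * (P + Q) := cs
          _ = (Xv * Q + Yv * P) * 4 := by rw [hPQ4]
          _ ≤ ((1 + Cc^2) * (P * Q)) * 4 := by linarith
          _ = (4 * (1 + Cc^2)) * (P * Q) := by ring
      exact le_of_mul_le_mul_right h4 hpos
    have h2s : 2 * Real.sqrt (1 + Cc^2) = Real.sqrt (4 * (1 + Cc^2)) := by
      rw [show (4 : ℝ) * (1 + Cc^2) = 2^2 * (1 + Cc^2) by ring, Real.sqrt_mul (by positivity),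
        Real.sqrt_sq (by norm_num)]
    rw [h2s]
    calc S + T = Real.sqrt ((S+T)^2) := (Real.sqrt_sq (by positivity)).symm
      _ ≤ Real.sqrt (4 * (1 + Cc^2)) := Real.sqrt_le_sqrt hsq
  linarith

set_option maxHeartbeats 4000000 in
/-- the rank-2 state ρ = (1/2) diag-block [[1−a, C],[C, 1+a]] on the
span of |01⟩, |10⟩ (with |a| ≤ √(1−C²)) is a density matrix with concurrence C and
maximal CHSH expectation √(1 + C²). -/
theorem rank_two_maximal_chsh (Cc a : ℝ) (h0 : 0 ≤ Cc) (h1 : Cc ≤ 1)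
    (ha : |a| ≤ Real.sqrt (1 - Cc ^ 2))
    (ρ : Matrix (Fin 2 × Fin 2) (Fin 2 × Fin 2) ℂ)
    (hρ : ρ = Matrix.of fun p q =>
      if p = ((0 : Fin 2), (1 : Fin 2)) ∧ q = ((0 : Fin 2), (1 : Fin 2)) then ((1 - a) / 2 : ℂ)
      else if p = (0, 1) ∧ q = (1, 0) then (Cc / 2 : ℂ)
      else if p = (1, 0) ∧ q = (0, 1) then (Cc / 2 : ℂ)
      else if p = (1, 0) ∧ q = (1, 0) then ((1 + a) / 2 : ℂ)
      else 0) :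
    ρ.PosSemidef ∧ ρ.trace = 1 ∧
      (∃ l : Fin 4 → ℝ, Antitone l ∧ (∀ i, 0 ≤ l i) ∧
        (ρ * (pauli 1 ⊗ₖ pauli 1) * ρᵀ * (pauli 1 ⊗ₖ pauli 1)).charpoly
          = (∏ i : Fin 4, (Polynomial.X - Polynomial.C (l i : ℂ))) ∧
        max 0 (Real.sqrt (l 0) - Real.sqrt (l 1) - Real.sqrt (l 2) - Real.sqrt (l 3)) = Cc) ∧
      IsGreatest (betaSet ρ) (Real.sqrt (1 + Cc ^ 2)) := by
  have hCsq : 0 ≤ 1 - Cc ^ 2 := by nlinarith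
  have ha2 : a ^ 2 ≤ 1 - Cc ^ 2 := by
    have h := pow_le_pow_left₀ (abs_nonneg a) ha 2
    rwa [sq_abs, Real.sq_sqrt hCsq] at h
  have h1a : 0 ≤ 1 - a := by nlinarith
  have h1a' : 0 ≤ 1 + a := by nlinarith
  -- positive semidefiniteness
  have hpsd : ρ.PosSemidef := by
    rw [Matrix.posSemidef_iff_dotProduct_mulVec]
    constructor
    · ext p q
      fin_cases p <;> fin_cases q <;>
        simp [hρ, Matrix.conjTranspose_apply, Prod.ext_iff, Complex.ext_iff]
    · intro x
      have key : dotProduct (star x) (ρ *ᵥ x) =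
          ((1 - a) / 2 : ℂ) * (starRingEnd ℂ (x (0,1)) * x (0,1))
          + (Cc / 2 : ℂ) * (starRingEnd ℂ (x (0,1)) * x (1,0) + starRingEnd ℂ (x (1,0)) * x (0,1))
          + ((1 + a) / 2 : ℂ) * (starRingEnd ℂ (x (1,0)) * x (1,0)) := by
        simp [hρ, dotProduct, Matrix.mulVec, Fintype.sum_prod_type, Fin.sum_univ_two,
          Prod.ext_iff]
        ring
      rw [key, Complex.le_def]
      set u := x (0,1); set v := x (1,0)
      constructor
      · simp only [Complex.add_re, Complex.mul_re, Complex.zero_re, Complex.conj_re,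
          Complex.conj_im, Complex.add_im, Complex.mul_im, Complex.ofReal_re, Complex.ofReal_im,
          Complex.div_re, Complex.div_im, Complex.sub_re, Complex.sub_im, Complex.one_re,
          Complex.one_im]
        norm_num [Complex.normSq_apply]
        nlinarith [sq_nonneg ((1-a)*u.re + Cc*v.re), sq_nonneg (Cc*u.re + (1+a)*v.re),
          sq_nonneg ((1-a)*u.im + Cc*v.im), sq_nonneg (Cc*u.im + (1+a)*v.im),
          mul_nonneg (by nlinarith : (0:ℝ) ≤ 1 - a^2 - Cc^2)
            (by positivity : (0:ℝ) ≤ u.re^2+v.re^2+u.im^2+v.im^2)]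
      · simp only [Complex.add_im, Complex.mul_im, Complex.zero_im, Complex.conj_re,
          Complex.conj_im, Complex.mul_re, Complex.ofReal_re, Complex.ofReal_im, Complex.div_re,
          Complex.div_im, Complex.sub_re, Complex.sub_im, Complex.one_re, Complex.one_im,
          Complex.add_re]
        norm_num [Complex.normSq_apply]
        ring
  -- trace one
  have htrace1 : ρ.trace = 1 := by
    simp [hρ, Matrix.trace, Fintype.sum_prod_type, Fin.sum_univ_two, Prod.ext_iff]
    ring
  -- correlation traces
  have htr : ∀ i j : Fin 3, Matrix.trace (ρ * (pauli i ⊗ₖ pauli j)) = ((Rfun Cc i j : ℝ) : ℂ) := by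
    subst hρ
    intro i j
    fin_cases i <;> fin_cases j <;>
      · simp [Matrix.trace, Matrix.mul_apply, Fintype.sum_prod_type, Fin.sum_univ_two, pauli,
          kroneckerMap_apply, Prod.ext_iff, Rfun]
        try ring
  have htrace : ∀ A B c d : Fin 3 → ℝ, Matrix.trace (ρ * bellOp A B c d) =
      (((Cc * (A 0 * (c 0 + d 0) + B 0 * (c 0 - d 0))
        + Cc * (A 1 * (c 1 + d 1) + B 1 * (c 1 - d 1))
        - (A 2 * (c 2 + d 2) + B 2 * (c 2 - d 2))) / 2 : ℝ) : ℂ) := by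
    intro A B c d
    have expand : Matrix.trace (ρ * bellOp A B c d) = (1/2 : ℂ) * ∑ i, ∑ j,
        ((A i * (c j + d j) + B i * (c j - d j) : ℝ) : ℂ)
          * Matrix.trace (ρ * (pauli i ⊗ₖ pauli j)) := by
      simp [bellOp, Matrix.mul_smul, Matrix.mul_sum, mul_smul_comm, Finset.mul_sum,
        Matrix.trace_sum, Matrix.trace_smul, smul_eq_mul]
    rw [expand]
    simp only [htr, Fin.sum_univ_three, Rfun]
    push_cast
    ring
  refine ⟨hpsd, htrace1, ?_, ?_⟩
  · -- concurrence
    have hw0 : 0 ≤ Real.sqrt (1 - a^2) := Real.sqrt_nonneg _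
    set w := Real.sqrt (1 - a^2) with hw
    have hw2 : w^2 = 1 - a^2 := Real.sq_sqrt (by nlinarith)
    have hwC : Cc ≤ w := by
      rw [hw, ← Real.sqrt_sq h0]
      exact Real.sqrt_le_sqrt (by nlinarith)
    refine ⟨![((w+Cc)/2)^2, ((w-Cc)/2)^2, 0, 0], ?_, ?_, ?_, ?_⟩
    · intro i j hij
      fin_cases i <;> fin_cases j <;> (try exact absurd hij (by decide)) <;>
        simp (config := { decide := true }) [Matrix.cons_val_zero, Matrix.cons_val_one,
          Matrix.head_cons, Matrix.vecHead, Matrix.vecTail] <;>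
        nlinarith [mul_nonneg hw0 h0, sq_nonneg (w-Cc), sq_nonneg (w+Cc)]
    · intro i
      fin_cases i <;>
        simp [Matrix.cons_val_zero, Matrix.cons_val_one, Matrix.head_cons, Matrix.vecHead,
          Matrix.vecTail] <;>
        positivity
    · have hM : ρ * (pauli 1 ⊗ₖ pauli 1) * ρᵀ * (pauli 1 ⊗ₖ pauli 1) = Matrix.of fun p q =>
          if p = ((0 : Fin 2), (1 : Fin 2)) ∧ q = ((0 : Fin 2), (1 : Fin 2))
            then (((1 - a^2 + Cc^2)/4 : ℝ) : ℂ)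
          else if p = (0, 1) ∧ q = (1, 0) then ((Cc * (1 - a) / 2 : ℝ) : ℂ)
          else if p = (1, 0) ∧ q = (0, 1) then ((Cc * (1 + a) / 2 : ℝ) : ℂ)
          else if p = (1, 0) ∧ q = (1, 0) then (((1 - a^2 + Cc^2)/4 : ℝ) : ℂ)
          else 0 := by
        subst hρ
        ext p q
        fin_cases p <;> fin_cases q <;>
          · simp [Matrix.mul_apply, Fintype.sum_prod_type, Fin.sum_univ_two, pauli,
              kroneckerMap_apply, Prod.ext_iff, Matrix.transpose_apply, Complex.ext_iff]
            try ring_nf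
            try simp [Complex.I_sq, ← Complex.ofReal_pow]
            try ring
            try constructor <;> ring
      have hsumR : ((w+Cc)/2)^2 + ((w-Cc)/2)^2 = (1 - a^2 + Cc^2)/4 + (1 - a^2 + Cc^2)/4 := by
        linear_combination (1/2) * hw2
      have hprodR : ((w+Cc)/2)^2 * ((w-Cc)/2)^2
          = ((1 - a^2 + Cc^2)/4) * ((1 - a^2 + Cc^2)/4) - (Cc * (1 - a) / 2) * (Cc * (1 + a) / 2) := by
        linear_combination ((w^2 + (1 - a^2) - 2*Cc^2)/16) * hw2
      have hsum : ((((w+Cc)/2)^2 : ℝ) : ℂ) + ((((w-Cc)/2)^2 : ℝ) : ℂ)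
          = (((1 - a^2 + Cc^2)/4 : ℝ) : ℂ) + (((1 - a^2 + Cc^2)/4 : ℝ) : ℂ) := by
        exact_mod_cast hsumR
      have hprod : ((((w+Cc)/2)^2 : ℝ) : ℂ) * ((((w-Cc)/2)^2 : ℝ) : ℂ)
          = (((1 - a^2 + Cc^2)/4 : ℝ) : ℂ) * (((1 - a^2 + Cc^2)/4 : ℝ) : ℂ)
            - ((Cc * (1 - a) / 2 : ℝ) : ℂ) * ((Cc * (1 + a) / 2 : ℝ) : ℂ) := by
        exact_mod_cast hprodR
      have hch := charpoly_aux _ _ _ _ _ _ hM hsum hprod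
      rw [hch, Fin.prod_univ_four]
      norm_num [Matrix.cons_val_zero, Matrix.cons_val_one, Matrix.head_cons, Matrix.vecHead,
        Matrix.vecTail]
      simp
    · have hl0 : Real.sqrt (((w+Cc)/2)^2) = (w+Cc)/2 := Real.sqrt_sq (by positivity)
      have hl1 : Real.sqrt (((w-Cc)/2)^2) = (w-Cc)/2 := Real.sqrt_sq (by linarith)
      have h2 : (![((w+Cc)/2)^2, ((w-Cc)/2)^2, 0, 0] : Fin 4 → ℝ) 2 = 0 := rfl
      have h3 : (![((w+Cc)/2)^2, ((w-Cc)/2)^2, 0, 0] : Fin 4 → ℝ) 3 = 0 := rfl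
      simp only [Matrix.cons_val_zero, Matrix.cons_val_one, Matrix.head_cons, h2, h3,
        Real.sqrt_zero, hl0, hl1]
      rw [show (w+Cc)/2 - (w-Cc)/2 - 0 - 0 = Cc by ring]
      exact max_eq_right h0
  · -- CHSH
    have hs0 : (0:ℝ) < Real.sqrt (1 + Cc^2) := Real.sqrt_pos.mpr (by positivity)
    have hs2 : Real.sqrt (1 + Cc^2) ^ 2 = 1 + Cc^2 := Real.sq_sqrt (by positivity)
    set s := Real.sqrt (1 + Cc^2) with hsdef
    constructor
    · -- membership
      refine ⟨![0,0,-1], ![1,0,0], ![Cc/s, 0, 1/s], ![-Cc/s, 0, 1/s], ?_, ?_, ?_, ?_, ?_⟩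
      · simp [unitVec, Fin.sum_univ_three]
      · simp [unitVec, Fin.sum_univ_three]
      · simp only [unitVec, Fin.sum_univ_three, Matrix.cons_val_zero, Matrix.cons_val_one,
          Matrix.head_cons, Matrix.cons_val_two, Matrix.vecHead, Matrix.vecTail]
        simp only [Function.comp_apply, Fin.succ_zero_eq_one, Matrix.cons_val_one, Matrix.cons_val_zero]
        field_simp
        linarith [hs2]
      · simp only [unitVec, Fin.sum_univ_three, Matrix.cons_val_zero, Matrix.cons_val_one,
          Matrix.head_cons, Matrix.cons_val_two, Matrix.vecHead, Matrix.vecTail]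
        simp only [Function.comp_apply, Fin.succ_zero_eq_one, Matrix.cons_val_one, Matrix.cons_val_zero]
        field_simp
        linarith [hs2]
      · rw [htrace, Complex.ofReal_re]
        simp only [Matrix.cons_val_zero, Matrix.cons_val_one, Matrix.head_cons,
          Matrix.cons_val_two, Matrix.vecHead, Matrix.vecTail, Function.comp_apply]
        simp only [Fin.succ_zero_eq_one, Matrix.cons_val_one, Matrix.cons_val_zero]
        field_simp
        linarith [hs2]
    · -- upper bound
      rintro t ⟨A, B, c, d, hA, hB, hc, hd, ht⟩
      rw [ht, htrace, Complex.ofReal_re]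
      have hA' : A 0^2 + A 1^2 + A 2^2 = 1 := by
        simpa [unitVec, Fin.sum_univ_three] using hA
      have hB' : B 0^2 + B 1^2 + B 2^2 = 1 := by
        simpa [unitVec, Fin.sum_univ_three] using hB
      have hc' : c 0^2 + c 1^2 + c 2^2 = 1 := by
        simpa [unitVec, Fin.sum_univ_three] using hc
      have hd' : d 0^2 + d 1^2 + d 2^2 = 1 := by
        simpa [unitVec, Fin.sum_univ_three] using hd
      have hPQ : (c 0 + d 0)^2 + (c 1 + d 1)^2 + (c 2 + d 2)^2
          + ((c 0 - d 0)^2 + (c 1 - d 1)^2 + (c 2 - d 2)^2) = 4 := by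
        linear_combination 2 * hc' + 2 * hd'
      have horth : (c 0 + d 0)*(c 0 - d 0) + (c 1 + d 1)*(c 1 - d 1)
          + (c 2 + d 2)*(c 2 - d 2) = 0 := by
        linear_combination hc' - hd'
      have hb := chsh_bound_aux Cc h0 h1 (A 0) (A 1) (A 2) (B 0) (B 1) (B 2)
        (c 0 + d 0) (c 1 + d 1) (c 2 + d 2) (c 0 - d 0) (c 1 - d 1) (c 2 - d 2)
        hA' hB' hPQ horth
      rw [hsdef]
      linarith [hb]
end
end

section
/- Among all density matrices with a fixed spectrum, the Bell diagonal state maximizes the CHSH expectation with respect to any fixed Bell operator commuting with it: if ρ is Bell diagonal (diagonal in the Bell basis) with eigenvalues matched in decreasing order to those of the Bell operator B, then for every unitary U ∈ U(4), tr(UρU*·B) ≤ tr(ρB). -/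
open Matrix Kronecker BigOperators ComplexOrder

noncomputable section

/- ### auxiliary lemmas -/

lemma aux_hs : (Real.sqrt 2 : ℂ)⁻¹ * (Real.sqrt 2 : ℂ)⁻¹ = 1/2 := by
  rw [← mul_inv, ← Complex.ofReal_mul, Real.mul_self_sqrt (by norm_num)]
  norm_num

lemma bell_ortho (i j : Fin 4) : star (bell i) ⬝ᵥ bell j = if i = j then 1 else 0 := by
  fin_cases i <;> fin_cases j <;>
    simp [dotProduct, Fintype.sum_prod_type, Fin.sum_univ_two, bell, Prod.ext_iff, aux_hs] <;>
    ring_nf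

lemma bell_complete : ∑ i, bellProj i = 1 := by
  ext p q
  rw [Matrix.sum_apply]
  obtain ⟨p1, p2⟩ := p
  obtain ⟨q1, q2⟩ := q
  fin_cases p1 <;> fin_cases p2 <;> fin_cases q1 <;> fin_cases q2 <;>
    simp [Fin.sum_univ_four, bellProj, vecMulVec_apply, bell, Prod.ext_iff,
      Matrix.one_apply, aux_hs] <;> ring_nf

section vmv
variable {n : Type*} [Fintype n]

lemma mul_vmv (U : Matrix n n ℂ) (a b : n → ℂ) :
    U * vecMulVec a b = vecMulVec (U *ᵥ a) b := by
  ext i j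
  simp [Matrix.mul_apply, vecMulVec_apply, mulVec, dotProduct, Finset.sum_mul, mul_assoc]

lemma vmv_mul (U : Matrix n n ℂ) (a b : n → ℂ) :
    vecMulVec a b * U = vecMulVec a (b ᵥ* U) := by
  ext i j
  simp [Matrix.mul_apply, vecMulVec_apply, vecMul, dotProduct, Finset.mul_sum, mul_assoc]

lemma conj_vmv (U : Matrix n n ℂ) (a : n → ℂ) :
    U * vecMulVec a (star a) * star U = vecMulVec (U *ᵥ a) (star (U *ᵥ a)) := by
  rw [mul_vmv, vmv_mul, Matrix.star_eq_conjTranspose, ← Matrix.star_mulVec]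

lemma trace_vmv_mul_vmv (u v : n → ℂ) :
    trace (vecMulVec u (star u) * vecMulVec v (star v)) = (star u ⬝ᵥ v) * (star v ⬝ᵥ u) := by
  simp only [trace, diag, Matrix.mul_apply, vecMulVec_apply, dotProduct, Finset.sum_mul,
    Finset.mul_sum, Pi.star_apply, RCLike.star_def]
  refine Finset.sum_congr rfl fun y _ => Finset.sum_congr rfl fun x _ => ?_
  ring

lemma trace_vmv (u : n → ℂ) : trace (vecMulVec u (star u)) = star u ⬝ᵥ u := by
  simp only [trace, diag, vecMulVec_apply, dotProduct, Pi.star_apply, RCLike.star_def]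
  exact Finset.sum_congr rfl fun x _ => by ring

lemma dot_star_comm (u v : n → ℂ) : star v ⬝ᵥ u = starRingEnd ℂ (star u ⬝ᵥ v) := by
  simp only [dotProduct, Pi.star_apply, RCLike.star_def, map_sum, _root_.map_mul,
    Complex.conj_conj]
  exact Finset.sum_congr rfl fun x _ => mul_comm _ _

end vmv

lemma rearr (l m : Fin 4 → ℝ) (hl : Antitone l) (hm : Antitone m)
    (D : Fin 4 → Fin 4 → ℝ) (hpos : ∀ i j, 0 ≤ D i j)
    (hrow : ∀ i, ∑ j, D i j = 1) (hcol : ∀ j, ∑ i, D i j = 1) :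
    ∑ i, ∑ j, D i j * (l i * m j) ≤ ∑ i, l i * m i := by
  have r0 := hrow 0; have r1 := hrow 1; have r2 := hrow 2; have r3 := hrow 3
  have c0 := hcol 0; have c1 := hcol 1; have c2 := hcol 2; have c3 := hcol 3
  simp only [Fin.sum_univ_four] at r0 r1 r2 r3 c0 c1 c2 c3 ⊢
  have l01 : l 1 ≤ l 0 := hl (by decide)
  have l12 : l 2 ≤ l 1 := hl (by decide)
  have l23 : l 3 ≤ l 2 := hl (by decide)
  have m01 : m 1 ≤ m 0 := hm (by decide)
  have m12 : m 2 ≤ m 1 := hm (by decide)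
  have m23 : m 3 ≤ m 2 := hm (by decide)
  have h00 := hpos 0 0; have h01 := hpos 0 1; have h02 := hpos 0 2; have h03 := hpos 0 3
  have h10 := hpos 1 0; have h11 := hpos 1 1; have h12 := hpos 1 2; have h13 := hpos 1 3
  have h20 := hpos 2 0; have h21 := hpos 2 1; have h22 := hpos 2 2; have h23 := hpos 2 3
  have h30 := hpos 3 0; have h31 := hpos 3 1; have h32 := hpos 3 2; have h33 := hpos 3 3
  have P00 : 0 ≤ (l 0 - l 1) * (m 0 - m 1) * (1 - D 0 0) :=
    mul_nonneg (mul_nonneg (by linarith) (by linarith)) (by linarith)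
  have P01 : 0 ≤ (l 0 - l 1) * (m 1 - m 2) * (1 - (D 0 0 + D 0 1)) :=
    mul_nonneg (mul_nonneg (by linarith) (by linarith)) (by linarith)
  have P02 : 0 ≤ (l 0 - l 1) * (m 2 - m 3) * (1 - (D 0 0 + D 0 1 + D 0 2)) :=
    mul_nonneg (mul_nonneg (by linarith) (by linarith)) (by linarith)
  have P10 : 0 ≤ (l 1 - l 2) * (m 0 - m 1) * (1 - (D 0 0 + D 1 0)) :=
    mul_nonneg (mul_nonneg (by linarith) (by linarith)) (by linarith)
  have P11 : 0 ≤ (l 1 - l 2) * (m 1 - m 2) * (2 - (D 0 0 + D 0 1 + D 1 0 + D 1 1)) :=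
    mul_nonneg (mul_nonneg (by linarith) (by linarith)) (by linarith)
  have P12 : 0 ≤ (l 1 - l 2) * (m 2 - m 3) * (2 - (D 0 0 + D 0 1 + D 0 2 + D 1 0 + D 1 1 + D 1 2)) :=
    mul_nonneg (mul_nonneg (by linarith) (by linarith)) (by linarith)
  have P20 : 0 ≤ (l 2 - l 3) * (m 0 - m 1) * (1 - (D 0 0 + D 1 0 + D 2 0)) :=
    mul_nonneg (mul_nonneg (by linarith) (by linarith)) (by linarith)
  have P21 : 0 ≤ (l 2 - l 3) * (m 1 - m 2) * (2 - (D 0 0 + D 0 1 + D 1 0 + D 1 1 + D 2 0 + D 2 1)) :=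
    mul_nonneg (mul_nonneg (by linarith) (by linarith)) (by linarith)
  have P22 : 0 ≤ (l 2 - l 3) * (m 2 - m 3) *
      (3 - (D 0 0 + D 0 1 + D 0 2 + D 1 0 + D 1 1 + D 1 2 + D 2 0 + D 2 1 + D 2 2)) :=
    mul_nonneg (mul_nonneg (by linarith) (by linarith)) (by linarith)
  have Ec0 : (D 0 0 + D 1 0 + D 2 0 + D 3 0) * (l 3 * (m 0 - m 3)) = l 3 * (m 0 - m 3) := by
    rw [c0, one_mul]
  have Ec1 : (D 0 1 + D 1 1 + D 2 1 + D 3 1) * (l 3 * (m 1 - m 3)) = l 3 * (m 1 - m 3) := by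
    rw [c1, one_mul]
  have Ec2 : (D 0 2 + D 1 2 + D 2 2 + D 3 2) * (l 3 * (m 2 - m 3)) = l 3 * (m 2 - m 3) := by
    rw [c2, one_mul]
  have Er0 : (D 0 0 + D 0 1 + D 0 2 + D 0 3) * (m 3 * (l 0 - l 3)) = m 3 * (l 0 - l 3) := by
    rw [r0, one_mul]
  have Er1 : (D 1 0 + D 1 1 + D 1 2 + D 1 3) * (m 3 * (l 1 - l 3)) = m 3 * (l 1 - l 3) := by
    rw [r1, one_mul]
  have Er2 : (D 2 0 + D 2 1 + D 2 2 + D 2 3) * (m 3 * (l 2 - l 3)) = m 3 * (l 2 - l 3) := by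
    rw [r2, one_mul]
  have Et : (D 0 0 + D 0 1 + D 0 2 + D 0 3 + D 1 0 + D 1 1 + D 1 2 + D 1 3 +
      D 2 0 + D 2 1 + D 2 2 + D 2 3 + D 3 0 + D 3 1 + D 3 2 + D 3 3) * (l 3 * m 3)
      = 4 * (l 3 * m 3) := by
    rw [show D 0 0 + D 0 1 + D 0 2 + D 0 3 + D 1 0 + D 1 1 + D 1 2 + D 1 3 +
      D 2 0 + D 2 1 + D 2 2 + D 2 3 + D 3 0 + D 3 1 + D 3 2 + D 3 3 = (4:ℝ) by linarith]
  linarith [P00, P01, P02, P10, P11, P12, P20, P21, P22, Ec0, Ec1, Ec2, Er0, Er1, Er2, Et]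

/-- a Bell diagonal state, with eigenvalues matched in decreasing
order to those of a Bell diagonal CHSH Bell operator B, maximizes tr(·B) among
all states with the same spectrum: tr(UρU*B) ≤ tr(ρB) for all unitaries U. -/
theorem bellDiagonal_maximizes_chsh (lam mu : Fin 4 → ℝ)
    (hlam : Antitone lam) (hpos : ∀ i, 0 ≤ lam i) (hsum : ∑ i, lam i = 1)
    (hmu : Antitone mu)
    (ρ B : Matrix (Fin 2 × Fin 2) (Fin 2 × Fin 2) ℂ)
    (hρ : ρ = ∑ i, (lam i : ℂ) • bellProj i)
    (hBform : ∃ a b c d : Fin 3 → ℝ, unitVec a ∧ unitVec b ∧ unitVec c ∧ unitVec d ∧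
      B = bellOp a b c d)
    (hBdiag : B = ∑ i, (mu i : ℂ) • bellProj i) :
    ∀ U ∈ Matrix.unitaryGroup (Fin 2 × Fin 2) ℂ,
      (Matrix.trace (U * ρ * star U * B)).re ≤ (Matrix.trace (ρ * B)).re := by
  intro U hU
  have hU1 : star U * U = 1 := (Unitary.mem_iff.mp hU).1
  have hU2 : U * star U = 1 := (Unitary.mem_iff.mp hU).2
  -- expansion of both traces into double sums
  have expand : ∀ V W : Matrix (Fin 2 × Fin 2) (Fin 2 × Fin 2) ℂ, V * ρ * W * B =
      ∑ i, ∑ j, ((lam i : ℂ) * (mu j : ℂ)) • (V * bellProj i * W * bellProj j) := by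
    intro V W
    rw [hρ, hBdiag]
    simp only [Matrix.mul_sum, Matrix.sum_mul, Matrix.smul_mul, Matrix.mul_smul, smul_smul,
      Finset.smul_sum]
    rw [Finset.sum_comm]
    exact Finset.sum_congr rfl fun i _ => Finset.sum_congr rfl fun j _ => by rw [mul_comm]
  -- trace of P i * P j
  have tracePP : ∀ i j, trace (bellProj i * bellProj j) = if i = j then 1 else 0 := by
    intro i j
    rw [bellProj, bellProj, trace_vmv_mul_vmv, bell_ortho, bell_ortho]
    by_cases h : i = j
    · subst h; simp
    · simp [h, Ne.symm h]
  -- the doubly stochastic matrix D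
  set D : Fin 4 → Fin 4 → ℝ :=
    fun i j => Complex.normSq (star (U *ᵥ bell i) ⬝ᵥ bell j) with hDdef
  have traceD : ∀ i j, trace (U * bellProj i * star U * bellProj j) = ((D i j : ℝ) : ℂ) := by
    intro i j
    rw [bellProj, bellProj, conj_vmv, trace_vmv_mul_vmv,
      dot_star_comm (U *ᵥ bell i) (bell j), Complex.mul_conj]
  have hDpos : ∀ i j, 0 ≤ D i j := fun i j => Complex.normSq_nonneg _
  have traceP : ∀ i, trace (bellProj i) = 1 := by
    intro i
    rw [bellProj, trace_vmv, bell_ortho]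
    simp
  have hrow : ∀ i, ∑ j, D i j = 1 := by
    intro i
    have hC : ∑ j, trace (U * bellProj i * star U * bellProj j) = 1 := by
      rw [← trace_sum, ← Matrix.mul_sum, bell_complete, mul_one, trace_mul_comm,
        ← mul_assoc, hU1, one_mul, traceP]
    rw [← Complex.ofReal_inj]
    push_cast
    rw [← hC]
    exact Finset.sum_congr rfl fun j _ => (traceD i j).symm
  have hcol : ∀ j, ∑ i, D i j = 1 := by
    intro j
    have hC : ∑ i, trace (U * bellProj i * star U * bellProj j) = 1 := by
      have : ∑ i, U * bellProj i * star U * bellProj j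
          = U * (∑ i, bellProj i) * star U * bellProj j := by
        rw [Matrix.mul_sum, Matrix.sum_mul, Matrix.sum_mul]
      rw [← trace_sum, this, bell_complete, mul_one, hU2, one_mul, traceP]
    rw [← Complex.ofReal_inj]
    push_cast
    rw [← hC]
    exact Finset.sum_congr rfl fun i _ => (traceD i j).symm
  -- compute both traces
  have hLHS : trace (U * ρ * star U * B)
      = ((∑ i, ∑ j, D i j * (lam i * mu j) : ℝ) : ℂ) := by
    rw [expand U (star U), trace_sum]
    push_cast
    refine Finset.sum_congr rfl fun i _ => ?_
    rw [trace_sum]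
    refine Finset.sum_congr rfl fun j _ => ?_
    rw [trace_smul, smul_eq_mul, traceD]
    push_cast
    ring
  have hRHS : trace (ρ * B) = ((∑ i, lam i * mu i : ℝ) : ℂ) := by
    have h1 := expand 1 1
    simp only [Matrix.one_mul, Matrix.mul_one] at h1
    rw [h1, trace_sum]
    push_cast
    refine Finset.sum_congr rfl fun i _ => ?_
    rw [trace_sum]
    have : ∀ j ∈ Finset.univ, trace (((lam i : ℂ) * (mu j : ℂ)) • (bellProj i * bellProj j))
        = ((lam i : ℂ) * (mu j : ℂ)) * (if i = j then 1 else 0) := by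
      intro j _
      rw [trace_smul, smul_eq_mul, tracePP]
    rw [Finset.sum_congr rfl this]
    simp [Finset.sum_ite_eq, mul_ite]
  rw [hLHS, hRHS, Complex.ofReal_re, Complex.ofReal_re]
  exact rearr lam mu hlam hmu D hDpos hrow hcol
end
end

section
/- Let ρ be a Bell diagonal state with eigenvalues λ₁ ≥ λ₂ ≥ λ₃ ≥ λ₄ (summing to 1). Then its maximal CHSH expectation is β(ρ) = √2·√((λ₂−λ₃)² + (λ₁−λ₄)²). -/
open Matrix Kronecker BigOperators ComplexOrder

noncomputable section

def corrv : Fin 4 → Fin 3 → ℝ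
  | 0 => ![1, -1, 1]
  | 1 => ![-1, 1, 1]
  | 2 => ![1, 1, -1]
  | 3 => ![-1, -1, -1]

lemma sq2 : ((Real.sqrt 2 : ℝ) : ℂ)⁻¹ * ((Real.sqrt 2 : ℝ) : ℂ)⁻¹ = (1/2 : ℂ) := by
  rw [← mul_inv, ← Complex.ofReal_mul, Real.mul_self_sqrt (by norm_num)]
  norm_num

set_option maxHeartbeats 2000000 in
lemma trace_bellProj_pauli (m : Fin 4) (k l : Fin 3) :
    Matrix.trace (bellProj m * (pauli k ⊗ₖ pauli l))
      = if k = l then (corrv m k : ℂ) else 0 := by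
  fin_cases m <;> fin_cases k <;> fin_cases l <;>
    simp [bellProj, bell, pauli, corrv, Matrix.trace, Matrix.mul_apply,
      Fintype.sum_prod_type, Fin.sum_univ_succ, Matrix.vecMulVec_apply,
      Matrix.kroneckerMap_apply] <;>
    rw [sq2] <;> norm_num

set_option maxHeartbeats 1000000 in
lemma trace_re (lam : Fin 4 → ℝ) (a b c d : Fin 3 → ℝ) :
    (Matrix.trace ((∑ m, (lam m : ℂ) • bellProj m) * bellOp a b c d)).re
    = (1/2) * ( (lam 0 - lam 1 + lam 2 - lam 3) * (a 0 * (c 0 + d 0) + b 0 * (c 0 - d 0))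
      + (-lam 0 + lam 1 + lam 2 - lam 3) * (a 1 * (c 1 + d 1) + b 1 * (c 1 - d 1))
      + (lam 0 + lam 1 - lam 2 - lam 3) * (a 2 * (c 2 + d 2) + b 2 * (c 2 - d 2)) ) := by
  have h : Matrix.trace ((∑ m, (lam m : ℂ) • bellProj m) * bellOp a b c d)
      = ∑ i, ∑ j, ∑ m, (1/2 : ℂ) *
          ((a i * (c j + d j) + b i * (c j - d j) : ℝ) : ℂ) * ((lam m : ℂ) *
            Matrix.trace (bellProj m * (pauli i ⊗ₖ pauli j))) := by
    simp only [bellOp, Matrix.sum_mul, Matrix.smul_mul, Matrix.trace_sum, Matrix.trace_smul,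
      smul_eq_mul, Matrix.mul_smul, Matrix.mul_sum, Finset.smul_sum, Finset.mul_sum]
    ring_nf
  rw [h]
  simp only [trace_bellProj_pauli]
  simp [Fin.sum_univ_four, Fin.sum_univ_three, corrv, Complex.add_re, Complex.mul_re,
    Complex.ofReal_re, Complex.ofReal_im]
  ring

set_option maxHeartbeats 1600000 in
/-- the maximal CHSH expectation of a Bell diagonal state with
decreasingly ordered eigenvalues λ₁ ≥ λ₂ ≥ λ₃ ≥ λ₄ is
√2·√((λ₂−λ₃)² + (λ₁−λ₄)²). -/
theorem bellDiagonal_chsh_value (lam : Fin 4 → ℝ)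
    (hlam : Antitone lam) (hpos : ∀ i, 0 ≤ lam i) (hsum : ∑ i, lam i = 1)
    (ρ : Matrix (Fin 2 × Fin 2) (Fin 2 × Fin 2) ℂ)
    (hρ : ρ = ∑ i, (lam i : ℂ) • bellProj i) :
    IsGreatest (betaSet ρ)
      (Real.sqrt 2 * Real.sqrt ((lam 1 - lam 2) ^ 2 + (lam 0 - lam 3) ^ 2)) := by
  have h10 : lam 1 ≤ lam 0 := hlam (by decide)
  have h21 : lam 2 ≤ lam 1 := hlam (by decide)
  have h32 : lam 3 ≤ lam 2 := hlam (by decide)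
  set c1 : ℝ := lam 0 - lam 1 + lam 2 - lam 3 with hc1def
  set c3 : ℝ := lam 0 + lam 1 - lam 2 - lam 3 with hc3def
  set r : ℝ := Real.sqrt (c1 ^ 2 + c3 ^ 2) with hrdef
  have hrnn : 0 ≤ r := Real.sqrt_nonneg _
  have hr2 : r ^ 2 = c1 ^ 2 + c3 ^ 2 := Real.sq_sqrt (by positivity)
  have hT : Real.sqrt 2 * Real.sqrt ((lam 1 - lam 2) ^ 2 + (lam 0 - lam 3) ^ 2) = r := by
    rw [hrdef, ← Real.sqrt_mul (by norm_num : (0:ℝ) ≤ 2)]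
    congr 1
    rw [hc1def, hc3def]
    ring
  rw [hT]
  constructor
  · -- membership
    set α : ℝ := if r = 0 then 0 else c1 / r with hα
    set γ : ℝ := if r = 0 then 1 else c3 / r with hγ
    have hunit : α ^ 2 + γ ^ 2 = 1 := by
      by_cases h : r = 0
      · simp [hα, hγ, h]
      · simp only [hα, hγ, if_neg h]
        field_simp
        linarith only [hr2]
    simp only [betaSet, Set.mem_setOf_eq]
    refine ⟨(fun i => if i = 2 then 1 else 0), (fun i => if i = 0 then 1 else 0),
      (fun i => if i = 0 then α else if i = 2 then γ else 0),
      (fun i => if i = 0 then -α else if i = 2 then γ else 0), ?_, ?_, ?_, ?_, ?_⟩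
    · simp [unitVec, Fin.sum_univ_three]
    · simp [unitVec, Fin.sum_univ_three]
    · simp [unitVec, Fin.sum_univ_three]
      linarith only [hunit]
    · simp [unitVec, Fin.sum_univ_three]
      linarith only [hunit]
    · rw [hρ, trace_re]
      simp only [reduceIte, Fin.reduceEq]
      by_cases h : r = 0
      · have hz : c1 ^ 2 + c3 ^ 2 = 0 := by rw [← hr2, h]; ring
        have hz1 : c1 = 0 := by nlinarith only [hz, sq_nonneg c1, sq_nonneg c3]
        have hz3 : c3 = 0 := by nlinarith only [hz, sq_nonneg c1, sq_nonneg c3]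
        rw [h]
        rw [← hc1def, ← hc3def, hz1, hz3]
        ring
      · simp only [hα, hγ, if_neg h]
        rw [← hc1def, ← hc3def]
        field_simp
        linarith only [hr2]
  · -- upper bound
    rintro t ht'
    simp only [betaSet, Set.mem_setOf_eq] at ht'
    obtain ⟨a, b, c, d, ha, hb, hc, hd, ht⟩ := ht'
    rw [hρ, trace_re] at ht
    have ha3 : a 0 ^ 2 + a 1 ^ 2 + a 2 ^ 2 = 1 := by
      simpa [unitVec, Fin.sum_univ_three] using ha
    have hb3 : b 0 ^ 2 + b 1 ^ 2 + b 2 ^ 2 = 1 := by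
      simpa [unitVec, Fin.sum_univ_three] using hb
    have hc3' : c 0 ^ 2 + c 1 ^ 2 + c 2 ^ 2 = 1 := by
      simpa [unitVec, Fin.sum_univ_three] using hc
    have hd3 : d 0 ^ 2 + d 1 ^ 2 + d 2 ^ 2 = 1 := by
      simpa [unitVec, Fin.sum_univ_three] using hd
    set c2' : ℝ := -lam 0 + lam 1 + lam 2 - lam 3 with hc2def
    set u0 : ℝ := c 0 + d 0 with hu0def
    set u1 : ℝ := c 1 + d 1 with hu1def
    set u2 : ℝ := c 2 + d 2 with hu2def
    set v0 : ℝ := c 0 - d 0 with hv0def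
    set v1 : ℝ := c 1 - d 1 with hv1def
    set v2 : ℝ := c 2 - d 2 with hv2def
    set P : ℝ := u0 ^ 2 + u1 ^ 2 + u2 ^ 2 with hPdef
    set Q : ℝ := v0 ^ 2 + v1 ^ 2 + v2 ^ 2 with hQdef
    have hPQ : P + Q = 4 := by
      rw [hPdef, hQdef, hu0def, hu1def, hu2def, hv0def, hv1def, hv2def]
      linear_combination 2 * hc3' + 2 * hd3
    have huv : u0 * v0 + u1 * v1 + u2 * v2 = 0 := by
      rw [hu0def, hu1def, hu2def, hv0def, hv1def, hv2def]
      linear_combination hc3' - hd3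
    have hP0 : 0 ≤ P := by rw [hPdef]; positivity
    have hQ0 : 0 ≤ Q := by rw [hQdef]; positivity
    set X : ℝ := c1 ^ 2 * u0 ^ 2 + c2' ^ 2 * u1 ^ 2 + c3 ^ 2 * u2 ^ 2 with hXdef
    set Y : ℝ := c1 ^ 2 * v0 ^ 2 + c2' ^ 2 * v1 ^ 2 + c3 ^ 2 * v2 ^ 2 with hYdef
    have hX0 : 0 ≤ X := by rw [hXdef]; positivity
    have hY0 : 0 ≤ Y := by rw [hYdef]; positivity
    have hsx : Real.sqrt X ^ 2 = X := Real.sq_sqrt hX0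
    have hsy : Real.sqrt Y ^ 2 = Y := Real.sq_sqrt hY0
    have hxnn : 0 ≤ Real.sqrt X := Real.sqrt_nonneg X
    have hynn : 0 ≤ Real.sqrt Y := Real.sqrt_nonneg Y
    clear_value c1 c3 r c2' u0 u1 u2 v0 v1 v2 P Q X Y
    have hc2sq : c2' ^ 2 ≤ c1 ^ 2 := by
      rw [hc1def, hc2def]
      nlinarith only [mul_nonneg (sub_nonneg.2 h10) (sub_nonneg.2 h32)]
    have hc13 : c1 ^ 2 ≤ c3 ^ 2 := by
      rw [hc1def, hc3def]
      nlinarith only [mul_nonneg (sub_nonneg.2 h21)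
        (sub_nonneg.2 (le_trans h32 (le_trans h21 h10)))]
    -- Cauchy-Schwarz bounds
    have hS1 : c1 * (a 0 * u0) + c2' * (a 1 * u1) + c3 * (a 2 * u2) ≤ Real.sqrt X := by
      have h1 : (c1 * (a 0 * u0) + c2' * (a 1 * u1) + c3 * (a 2 * u2)) ^ 2
          ≤ (a 0 ^ 2 + a 1 ^ 2 + a 2 ^ 2) * (c1 ^ 2 * u0 ^ 2 + c2' ^ 2 * u1 ^ 2 + c3 ^ 2 * u2 ^ 2) := by
        nlinarith only [sq_nonneg (a 0 * (c2' * u1) - a 1 * (c1 * u0)),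
          sq_nonneg (a 0 * (c3 * u2) - a 2 * (c1 * u0)),
          sq_nonneg (a 1 * (c3 * u2) - a 2 * (c2' * u1))]
      rw [ha3, one_mul, ← hXdef] at h1
      rcases le_or_gt (c1 * (a 0 * u0) + c2' * (a 1 * u1) + c3 * (a 2 * u2)) 0 with h | h
      · exact h.trans hxnn
      · nlinarith only [h1, hsx, hxnn, h]
    have hS2 : c1 * (b 0 * v0) + c2' * (b 1 * v1) + c3 * (b 2 * v2) ≤ Real.sqrt Y := by
      have h1 : (c1 * (b 0 * v0) + c2' * (b 1 * v1) + c3 * (b 2 * v2)) ^ 2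
          ≤ (b 0 ^ 2 + b 1 ^ 2 + b 2 ^ 2) * (c1 ^ 2 * v0 ^ 2 + c2' ^ 2 * v1 ^ 2 + c3 ^ 2 * v2 ^ 2) := by
        nlinarith only [sq_nonneg (b 0 * (c2' * v1) - b 1 * (c1 * v0)),
          sq_nonneg (b 0 * (c3 * v2) - b 2 * (c1 * v0)),
          sq_nonneg (b 1 * (c3 * v2) - b 2 * (c2' * v1))]
      rw [hb3, one_mul, ← hYdef] at h1
      rcases le_or_gt (c1 * (b 0 * v0) + c2' * (b 1 * v1) + c3 * (b 2 * v2)) 0 with h | h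
      · exact h.trans hynn
      · nlinarith only [h1, hsy, hynn, h]
    -- key bound on X + Y + 2√X√Y
    have hsq : X + Y + 2 * Real.sqrt X * Real.sqrt Y ≤ 4 * (c1 ^ 2 + c3 ^ 2) := by
      rcases eq_or_lt_of_le hP0 with hP | hP
      · -- P = 0
        have hP' : u0 ^ 2 + u1 ^ 2 + u2 ^ 2 = 0 := by rw [← hPdef, ← hP]
        have hu0' : u0 = 0 := by
          have : u0 ^ 2 = 0 := by linarith only [hP', sq_nonneg u0, sq_nonneg u1, sq_nonneg u2]
          exact pow_eq_zero_iff (two_ne_zero) |>.mp this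
        have hu1' : u1 = 0 := by
          have : u1 ^ 2 = 0 := by linarith only [hP', sq_nonneg u0, sq_nonneg u1, sq_nonneg u2]
          exact pow_eq_zero_iff (two_ne_zero) |>.mp this
        have hu2' : u2 = 0 := by
          have : u2 ^ 2 = 0 := by linarith only [hP', sq_nonneg u0, sq_nonneg u1, sq_nonneg u2]
          exact pow_eq_zero_iff (two_ne_zero) |>.mp this
        have hXz : X = 0 := by rw [hXdef, hu0', hu1', hu2']; ring
        have hQ4' : v0 ^ 2 + v1 ^ 2 + v2 ^ 2 = 4 := by
          rw [← hQdef]; linarith only [hPQ, hP]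
        have hYle : Y ≤ 4 * (c1 ^ 2 + c3 ^ 2) := by
          rw [hYdef]
          have e1 : 0 ≤ (c3 ^ 2 - c1 ^ 2) * v0 ^ 2 :=
            mul_nonneg (by linarith only [hc13]) (sq_nonneg v0)
          have e2 : 0 ≤ (c3 ^ 2 - c2' ^ 2) * v1 ^ 2 :=
            mul_nonneg (by linarith only [hc13, hc2sq]) (sq_nonneg v1)
          have e3 : c3 ^ 2 * (v0 ^ 2 + v1 ^ 2 + v2 ^ 2) = c3 ^ 2 * 4 := by rw [hQ4']
          nlinarith only [e1, e2, e3, sq_nonneg c1]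
        rw [hXz, Real.sqrt_zero]
        simpa using hYle
      rcases eq_or_lt_of_le hQ0 with hQ | hQ
      · -- Q = 0
        have hQ' : v0 ^ 2 + v1 ^ 2 + v2 ^ 2 = 0 := by rw [← hQdef, ← hQ]
        have hv0' : v0 = 0 := by
          have : v0 ^ 2 = 0 := by linarith only [hQ', sq_nonneg v0, sq_nonneg v1, sq_nonneg v2]
          exact pow_eq_zero_iff (two_ne_zero) |>.mp this
        have hv1' : v1 = 0 := by
          have : v1 ^ 2 = 0 := by linarith only [hQ', sq_nonneg v0, sq_nonneg v1, sq_nonneg v2]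
          exact pow_eq_zero_iff (two_ne_zero) |>.mp this
        have hv2' : v2 = 0 := by
          have : v2 ^ 2 = 0 := by linarith only [hQ', sq_nonneg v0, sq_nonneg v1, sq_nonneg v2]
          exact pow_eq_zero_iff (two_ne_zero) |>.mp this
        have hYz : Y = 0 := by rw [hYdef, hv0', hv1', hv2']; ring
        have hP4' : u0 ^ 2 + u1 ^ 2 + u2 ^ 2 = 4 := by
          rw [← hPdef]; linarith only [hPQ, hQ]
        have hXle : X ≤ 4 * (c1 ^ 2 + c3 ^ 2) := by
          rw [hXdef]
          have e1 : 0 ≤ (c3 ^ 2 - c1 ^ 2) * u0 ^ 2 :=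
            mul_nonneg (by linarith only [hc13]) (sq_nonneg u0)
          have e2 : 0 ≤ (c3 ^ 2 - c2' ^ 2) * u1 ^ 2 :=
            mul_nonneg (by linarith only [hc13, hc2sq]) (sq_nonneg u1)
          have e3 : c3 ^ 2 * (u0 ^ 2 + u1 ^ 2 + u2 ^ 2) = c3 ^ 2 * 4 := by rw [hP4']
          nlinarith only [e1, e2, e3, sq_nonneg c1]
        rw [hYz, Real.sqrt_zero]
        simpa using hXle
      · -- P, Q > 0
        have hw2 : Q * u2 ^ 2 + P * v2 ^ 2 ≤ P * Q := by
          rw [hPdef, hQdef]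
          have h0 : (u0 * v0 + u1 * v1 + u2 * v2) * (u0 * v0 + u1 * v1 - u2 * v2) = 0 := by
            rw [huv]; ring
          nlinarith only [sq_nonneg (u0 * v1 - u1 * v0), h0]
        have hw2' : (v0 ^ 2 + v1 ^ 2 + v2 ^ 2) * u2 ^ 2 + (u0 ^ 2 + u1 ^ 2 + u2 ^ 2) * v2 ^ 2
            ≤ (u0 ^ 2 + u1 ^ 2 + u2 ^ 2) * (v0 ^ 2 + v1 ^ 2 + v2 ^ 2) := by
          have := hw2
          rw [hPdef, hQdef] at this
          linarith only [this]
        have hkey : Q * X + P * Y ≤ P * Q * (c1 ^ 2 + c3 ^ 2) := by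
          rw [hPdef, hQdef, hXdef, hYdef]
          have e1 : 0 ≤ (c1 ^ 2 - c2' ^ 2) *
              ((v0 ^ 2 + v1 ^ 2 + v2 ^ 2) * u1 ^ 2 + (u0 ^ 2 + u1 ^ 2 + u2 ^ 2) * v1 ^ 2) :=
            mul_nonneg (by linarith only [hc2sq]) (by positivity)
          have e2 : 0 ≤ (c3 ^ 2 - c1 ^ 2) *
              ((u0 ^ 2 + u1 ^ 2 + u2 ^ 2) * (v0 ^ 2 + v1 ^ 2 + v2 ^ 2)
                - ((v0 ^ 2 + v1 ^ 2 + v2 ^ 2) * u2 ^ 2 + (u0 ^ 2 + u1 ^ 2 + u2 ^ 2) * v2 ^ 2)) :=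
            mul_nonneg (by linarith only [hc13]) (by linarith only [hw2'])
          nlinarith only [e1, e2]
        have hAM : 2 * (P * Q * (Real.sqrt X * Real.sqrt Y)) ≤ Q ^ 2 * X + P ^ 2 * Y := by
          nlinarith only [sq_nonneg (Q * Real.sqrt X - P * Real.sqrt Y), hsx, hsy,
            sq_nonneg P, sq_nonneg Q]
        have hz : (P + Q - 4) * (Q * X + P * Y) = 0 := by
          rw [show P + Q - 4 = 0 from by linarith only [hPQ]]; ring
        have hBig : (P * Q) * (X + Y + 2 * Real.sqrt X * Real.sqrt Y)
            ≤ (P * Q) * (4 * (c1 ^ 2 + c3 ^ 2)) := by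
          nlinarith only [hAM, hkey, hz]
        exact le_of_mul_le_mul_left hBig (mul_pos hP hQ)
    have hs : Real.sqrt X + Real.sqrt Y ≤ 2 * r := by
      have h1 : Real.sqrt X + Real.sqrt Y ≤ Real.sqrt (4 * r ^ 2) := by
        rw [← Real.sqrt_sq (by positivity : (0:ℝ) ≤ Real.sqrt X + Real.sqrt Y)]
        apply Real.sqrt_le_sqrt
        nlinarith only [hsx, hsy, hsq, hr2]
      rwa [show (4:ℝ) * r ^ 2 = (2 * r) ^ 2 from by ring,
        Real.sqrt_sq (by positivity)] at h1
    have hts : t = 1 / 2 * ((c1 * (a 0 * u0) + c2' * (a 1 * u1) + c3 * (a 2 * u2))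
        + (c1 * (b 0 * v0) + c2' * (b 1 * v1) + c3 * (b 2 * v2))) := by
      rw [ht, hc1def, hc3def, hc2def]; ring
    linarith only [hS1, hS2, hs, hts]
end
end
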